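/- arXiv:2408.07863 — 8 statements merged into one kernel-verified Lean document; each statement's English description precedes it below -/
import Mathlib

section
/- For every n ≥ 1 and every 1/2/3-puzzle P on Δ_n, the array 𝒯(P) is an interlacing triangular array of rank 3 and height n. -/
/-- Twice the horizontal coordinate `h(i,j,k) = i*n + j - (n+k)/2` of an entry
`T^(i)_(j,k)` of a triangular array of height `n` (doubled to stay in `ℤ`). -/
def Hc (n i j k : ℕ) : ℤ :=
  2 * ((i : ℤ) * (n : ℤ) + (j : ℤ)) - ((n : ℤ) + (k : ℤ))

/-- `T` is an interlacing triangular array of rank `m` and height `n`: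
entries `T i j k ∈ {1,…,m}` for `1 ≤ i ≤ m`, `1 ≤ j ≤ k ≤ n`;
(a) each value `a ∈ {1,…,m}` occurs exactly `k` times in row `k`;
(b) any two equal entries of row `k` have an interlacing equal entry in row `k-1`
strictly between them in horizontal coordinate. -/
def IsITA (m n : ℕ) (T : ℕ → ℕ → ℕ → ℕ) : Prop :=
  (∀ i j k, 1 ≤ i → i ≤ m → 1 ≤ j → j ≤ k → k ≤ n → T i j k ∈ Finset.Icc 1 m) ∧
  (∀ k, 1 ≤ k → k ≤ n → ∀ a ∈ Finset.Icc 1 m,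
      ((Finset.Icc 1 m ×ˢ Finset.Icc 1 k).filter (fun p => T p.1 p.2 k = a)).card = k) ∧
  (∀ k, 1 ≤ k → k ≤ n → ∀ i j i' j',
      1 ≤ i → i ≤ m → 1 ≤ j → j ≤ k → 1 ≤ i' → i' ≤ m → 1 ≤ j' → j' ≤ k →
      T i j k = T i' j' k → Hc n i j k < Hc n i' j' k →
      ∃ i'' j'', 1 ≤ i'' ∧ i'' ≤ m ∧ 1 ≤ j'' ∧ j'' ≤ k - 1 ∧
        T i'' j'' (k - 1) = T i j k ∧
        Hc n i j k < Hc n i'' j'' (k - 1) ∧ Hc n i'' j'' (k - 1) < Hc n i' j' k)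

/-- Edges of the triangular grid `Δ_n`: an edge is encoded as `(d, x, y)` with
`x + y < n`, where `d = 0` is the horizontal edge `{(x,y),(x+1,y)}`,
`d = 1` is the vertical edge `{(x,y),(x,y+1)}` (parallel to the left side), and
`d = 2` is the diagonal edge `{(x+1,y),(x,y+1)}` (parallel to the right side).
A `1/2/3`-puzzle is an edge labeling by `{1,2,3}` such that the three edges of
each upward face (`P 1 x y`, `P 2 x y`, `P 0 x y`) and of each downward face
(`P 2 x y`, `P 0 x (y+1)`, `P 1 (x+1) y`) get pairwise distinct labels. -/
def IsPuzzle123 (n : ℕ) (P : ℕ → ℕ → ℕ → ℕ) : Prop :=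
  (∀ d x y, d < 3 → x + y < n → P d x y ∈ Finset.Icc 1 3) ∧
  (∀ x y, x + y < n →
      P 1 x y ≠ P 2 x y ∧ P 1 x y ≠ P 0 x y ∧ P 2 x y ≠ P 0 x y) ∧
  (∀ x y, x + y + 1 < n →
      P 2 x y ≠ P 0 x (y + 1) ∧ P 2 x y ≠ P 1 (x + 1) y ∧ P 0 x (y + 1) ≠ P 1 (x + 1) y)

/-- The map `𝒯` from `1/2/3`-puzzles on `Δ_n` to triangular arrays: the `k`-th row
reads the boundary of the copy of `Δ_k` inside `Δ_n` clockwise from the base point: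
the left side bottom to top (`T^(1)`), the right side top to bottom (`T^(2)`),
the bottom side right to left (`T^(3)`). -/
def TofP (n : ℕ) (P : ℕ → ℕ → ℕ → ℕ) : ℕ → ℕ → ℕ → ℕ :=
  fun i j k =>
    if 1 ≤ j ∧ j ≤ k ∧ k ≤ n then
      if i = 1 then P 1 0 (j - 1)
      else if i = 2 then P 2 (j - 1) (k - j)
      else if i = 3 then P 0 (k - j) 0
      else 0
    else 0

/-!
Every face of a `1/2/3`-puzzle carries each label exactly once. The faces between the
boundaries of `Δ_m` and `Δ_{m+1}` form a zigzag strip: its outer path is the right side of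
`Δ_{m+1}` together with the adjacent edges of the two other sides, its inner path is the right
side of `Δ_m`, and the rest of the two boundaries is shared. Fix a label `a`. An `a` on an edge
crossing the strip is shared by the two faces it separates, so along the strip the `a`'s on the
outer path and those on the inner path alternate, beginning and ending on the outer path. Hence
row `m + 1` contains exactly one `a` more than row `m`, and between two `a`'s of row `m + 1`
lies an `a` of row `m`.
-/

open Finset

section ZigzagStrip

variable {α : Type*} [DecidableEq α]

theorem List.count_triple (u v w a : α) :
    [u, v, w].count a =
      (if u = a then 1 else 0) + (if v = a then 1 else 0) + (if w = a then 1 else 0) := by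
  simp only [List.count_cons, List.count_nil, beq_iff_eq]
  omega

/-- A strip of `2m + 1` triangles between the outer path `w 0, …, w (m + 2)` and the inner
path `v 0, …, v (m - 1)`, in which each triangle carries the label `a` exactly once.
The upward triangles have edges `l x, b x, w (x + 1)` and the downward ones `b x, l (x + 1), v x`;
the first and last edges `w 0 = l 0` and `w (m + 2) = b m` of the outer path are rungs. -/
structure IsZigzagStrip (m : ℕ) (a : α) (w v l b : ℕ → α) : Prop where
  left : l 0 = w 0
  bottom : b m = w (m + 2)
  up : ∀ x ≤ m, [l x, b x, w (x + 1)].count a = 1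
  down : ∀ x < m, [b x, l (x + 1), v x].count a = 1

namespace IsZigzagStrip

variable {m : ℕ} {a : α} {w v l b : ℕ → α}

theorem card_outer (h : IsZigzagStrip m a w v l b) :
    #{p ∈ range (m + 3) | w p = a} = #{z ∈ range m | v z = a} + 1 := by
  have key : ∀ k ≤ m, #{p ∈ range (k + 2) | w p = a} + (if b k = a then 1 else 0) =
      #{z ∈ range k | v z = a} + 1 := by
    intro k hk
    induction k with
    | zero =>
      have hup := h.up 0 (Nat.zero_le m)
      rw [List.count_triple, h.left] at hup
      simp only [card_filter, sum_range_succ, range_zero, sum_empty, zero_add] at hup ⊢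
      omega
    | succ k ih =>
      have hup := h.up (k + 1) hk
      have hdown := h.down k hk
      rw [List.count_triple] at hup hdown
      rw [show k + 1 + 1 = k + 2 from rfl] at hup
      have := ih (by omega)
      rw [show k + 1 + 2 = k + 2 + 1 by omega]
      simp only [card_filter, sum_range_succ] at this hup ⊢
      omega
  have := key m le_rfl
  rw [h.bottom] at this
  simpa only [card_filter, sum_range_succ] using this

theorem exists_inner_of_rung (h : IsZigzagStrip m a w v l b) {s y : ℕ} (hs : l s = a)
    (hsy : s ≤ y) (hym : y ≤ m) (hy : l y ≠ a) : ∃ z, s ≤ z ∧ z < y ∧ v z = a := by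
  by_contra! hv
  induction y, hsy using Nat.le_induction with
  | base => exact hy hs
  | succ y hsy ih =>
    refine ih (by omega) (fun hly => hy ?_) (fun z hsz hzy => hv z hsz (by omega))
    have hup := h.up y (by omega)
    have hdown := h.down y (by omega)
    have hvy := hv y hsy (by omega)
    rw [List.count_triple] at hup hdown
    split_ifs at hup hdown <;> simp_all

theorem exists_inner_between (h : IsZigzagStrip m a w v l b) {p q : ℕ} (hp : w p = a)
    (hq : w q = a) (hpq : p < q) (hqm : q ≤ m + 2) :
    ∃ z < m, p ≤ z + 1 ∧ z + 2 ≤ q ∧ v z = a := by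
  have hpm : p ≤ m := by
    by_contra hpm
    have hup := h.up m le_rfl
    obtain rfl : p = m + 1 := by omega
    obtain rfl : q = m + 2 := by omega
    rw [List.count_triple, h.bottom] at hup
    simp [hp, hq] at hup
  have hstart : l p = a ∨ 1 ≤ p ∧ v (p - 1) = a := by
    rcases p with _ | x
    · exact Or.inl (h.left.trans hp)
    · have hup := h.up x (by omega)
      have hdown := h.down x (by omega)
      rw [List.count_triple] at hup hdown
      split_ifs at hup hdown <;> simp_all
  obtain ⟨y, hpy, hyq, hym, hly⟩ : ∃ y, p ≤ y ∧ y + 1 ≤ q ∧ y ≤ m ∧ l y ≠ a := by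
    rcases Nat.lt_or_ge q (m + 2) with hqm' | hqm'
    · have hup := h.up (q - 1) (by omega)
      rw [List.count_triple, show q - 1 + 1 = q by omega] at hup
      refine ⟨q - 1, by omega, by omega, by omega, fun hl => ?_⟩
      simp only [hl, hq, if_true] at hup
      omega
    · obtain rfl : q = m + 2 := by omega
      have hup := h.up m le_rfl
      rw [List.count_triple, h.bottom] at hup
      refine ⟨m, hpm, by omega, le_rfl, fun hl => ?_⟩
      simp only [hl, hq, if_true] at hup
      omega
  rcases hstart with hl | ⟨hp1, hv⟩
  · obtain ⟨z, hpz, hzy, hz⟩ := h.exists_inner_of_rung hl hpy hym hly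
    exact ⟨z, by omega, by omega, by omega, hz⟩
  · exact ⟨p - 1, by omega, by omega, by omega, hv⟩

end IsZigzagStrip

end ZigzagStrip

theorem count_eq_one_of_pairwise_ne {u v w a : ℕ} (hu : u ∈ Icc 1 3) (hv : v ∈ Icc 1 3)
    (hw : w ∈ Icc 1 3) (ha : a ∈ Icc 1 3) (huv : u ≠ v) (huw : u ≠ w) (hvw : v ≠ w) :
    [u, v, w].count a = 1 := by
  simp only [mem_Icc] at hu hv hw ha
  rw [List.count_triple]
  split_ifs <;> omega

/-- The outer path of the strip between `Δ_m` and `Δ_{m+1}`: the top edge of the left side of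
`Δ_{m+1}`, the right side of `Δ_{m+1}` from top to bottom, and the right edge of its bottom side. -/
def stripOuter (P : ℕ → ℕ → ℕ → ℕ) (m p : ℕ) : ℕ :=
  if p = 0 then P 1 0 m else if p ≤ m + 1 then P 2 (p - 1) (m + 1 - p) else P 0 m 0

theorem stripOuter_succ (P : ℕ → ℕ → ℕ → ℕ) {m x : ℕ} (hx : x ≤ m) :
    stripOuter P m (x + 1) = P 2 x (m - x) := by
  simp [stripOuter, hx, show m + 1 - (x + 1) = m - x by omega]

theorem card_filter_stripOuter (P : ℕ → ℕ → ℕ → ℕ) (m a : ℕ) :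
    #{p ∈ range (m + 3) | stripOuter P m p = a} =
      (if P 1 0 m = a then 1 else 0) + #{x ∈ range (m + 1) | P 2 x (m - x) = a} +
        (if P 0 m 0 = a then 1 else 0) := by
  have hdiag : #{x ∈ range (m + 1) | stripOuter P m (x + 1) = a} =
      #{x ∈ range (m + 1) | P 2 x (m - x) = a} :=
    congrArg card <| filter_congr fun x hx => by
      rw [stripOuter_succ P (Nat.lt_succ_iff.mp (mem_range.mp hx))]
  rw [← hdiag]
  simp only [card_filter, sum_range_succ _ (m + 2), sum_range_succ']
  simp [stripOuter]
  omega

namespace IsPuzzle123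

variable {n : ℕ} {P : ℕ → ℕ → ℕ → ℕ}

theorem count_up (hP : IsPuzzle123 n P) {x y a : ℕ} (hxy : x + y < n) (ha : a ∈ Icc 1 3) :
    [P 1 x y, P 0 x y, P 2 x y].count a = 1 := by
  obtain ⟨h12, h10, h20⟩ := hP.2.1 x y hxy
  exact count_eq_one_of_pairwise_ne (hP.1 1 x y (by norm_num) hxy) (hP.1 0 x y (by norm_num) hxy)
    (hP.1 2 x y (by norm_num) hxy) ha h10 h12 h20.symm

theorem count_down (hP : IsPuzzle123 n P) {x y a : ℕ} (hxy : x + y + 1 < n) (ha : a ∈ Icc 1 3) :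
    [P 0 x (y + 1), P 1 (x + 1) y, P 2 x y].count a = 1 := by
  obtain ⟨h20, h21, h01⟩ := hP.2.2 x y hxy
  exact count_eq_one_of_pairwise_ne (hP.1 0 x (y + 1) (by norm_num) (by omega))
    (hP.1 1 (x + 1) y (by norm_num) (by omega)) (hP.1 2 x y (by norm_num) (by omega)) ha h01
    h20.symm h21.symm

theorem isZigzagStrip (hP : IsPuzzle123 n P) {m a : ℕ} (hm : m < n) (ha : a ∈ Icc 1 3) :
    IsZigzagStrip m a (stripOuter P m) (fun z => P 2 z (m - 1 - z)) (fun x => P 1 x (m - x))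
      (fun x => P 0 x (m - x)) where
  left := by simp [stripOuter]
  bottom := by simp [stripOuter]
  up x hx := by
    rw [stripOuter_succ P hx]
    exact hP.count_up (by omega) ha
  down x hx := by
    rw [show m - (x + 1) = m - 1 - x by omega, ← show m - 1 - x + 1 = m - x by omega]
    exact hP.count_down (by omega) ha

end IsPuzzle123

section TofP

variable {n : ℕ} {P : ℕ → ℕ → ℕ → ℕ} {j k : ℕ}

theorem TofP_one (hj : 1 ≤ j) (hjk : j ≤ k) (hkn : k ≤ n) : TofP n P 1 j k = P 1 0 (j - 1) := by
  simp [TofP, hj, hjk, hkn]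

theorem TofP_two (hj : 1 ≤ j) (hjk : j ≤ k) (hkn : k ≤ n) :
    TofP n P 2 j k = P 2 (j - 1) (k - j) := by
  simp [TofP, hj, hjk, hkn]

theorem TofP_three (hj : 1 ≤ j) (hjk : j ≤ k) (hkn : k ≤ n) : TofP n P 3 j k = P 0 (k - j) 0 := by
  simp [TofP, hj, hjk, hkn]

theorem TofP_mem (hP : IsPuzzle123 n P) {i : ℕ} (hi : 1 ≤ i) (hi3 : i ≤ 3) (hj : 1 ≤ j)
    (hjk : j ≤ k) (hkn : k ≤ n) : TofP n P i j k ∈ Icc 1 3 := by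
  interval_cases i
  · rw [TofP_one hj hjk hkn]; exact hP.1 _ _ _ (by norm_num) (by omega)
  · rw [TofP_two hj hjk hkn]; exact hP.1 _ _ _ (by norm_num) (by omega)
  · rw [TofP_three hj hjk hkn]; exact hP.1 _ _ _ (by norm_num) (by omega)

theorem card_filter_TofP_eq_sides (hkn : k ≤ n) (a : ℕ) :
    #{p ∈ Icc 1 3 ×ˢ Icc 1 k | TofP n P p.1 p.2 k = a} =
      #{x ∈ range k | P 1 0 x = a} + #{x ∈ range k | P 2 x (k - 1 - x) = a} +
        #{x ∈ range k | P 0 x 0 = a} := by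
  have hleft : #{j ∈ Icc 1 k | TofP n P 1 j k = a} = #{x ∈ range k | P 1 0 x = a} := by
    refine card_nbij' (· - 1) (· + 1) ?_ ?_ ?_ ?_ <;> intro x hx <;>
      simp only [mem_coe, mem_filter, mem_Icc, mem_range] at hx ⊢
    · rw [TofP_one hx.1.1 hx.1.2 hkn] at hx
      exact ⟨by omega, hx.2⟩
    · rw [TofP_one (by omega) (by omega) hkn, Nat.add_sub_cancel]
      exact ⟨by omega, hx.2⟩
    all_goals omega
  have hright : #{j ∈ Icc 1 k | TofP n P 2 j k = a} =
      #{x ∈ range k | P 2 x (k - 1 - x) = a} := by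
    refine card_nbij' (· - 1) (· + 1) ?_ ?_ ?_ ?_ <;> intro x hx <;>
      simp only [mem_coe, mem_filter, mem_Icc, mem_range] at hx ⊢
    · rw [TofP_two hx.1.1 hx.1.2 hkn, show k - x = k - 1 - (x - 1) by omega] at hx
      exact ⟨by omega, hx.2⟩
    · rw [TofP_two (by omega) (by omega) hkn, Nat.add_sub_cancel,
        show k - (x + 1) = k - 1 - x by omega]
      exact ⟨by omega, hx.2⟩
    all_goals omega
  have hbottom : #{j ∈ Icc 1 k | TofP n P 3 j k = a} = #{x ∈ range k | P 0 x 0 = a} := by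
    refine card_nbij' (k - ·) (k - ·) ?_ ?_ ?_ ?_ <;> intro x hx <;>
      simp only [mem_coe, mem_filter, mem_Icc, mem_range] at hx ⊢
    · rw [TofP_three hx.1.1 hx.1.2 hkn] at hx
      exact ⟨by omega, hx.2⟩
    · rw [TofP_three (by omega) (by omega) hkn, show k - (k - x) = x by omega]
      exact ⟨by omega, hx.2⟩
    all_goals omega
  rw [card_filter, sum_product, show Icc 1 3 = {1, 2, 3} by rfl, sum_insert (by decide),
    sum_insert (by decide), sum_singleton, ← add_assoc]
  simp only [← card_filter]
  rw [hleft, hright, hbottom]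

theorem IsPuzzle123.card_filter_TofP_eq (hP : IsPuzzle123 n P) {a : ℕ} (hkn : k ≤ n)
    (ha : a ∈ Icc 1 3) :
    #{p ∈ Icc 1 3 ×ˢ Icc 1 k | TofP n P p.1 p.2 k = a} = k := by
  rw [card_filter_TofP_eq_sides hkn]
  induction k with
  | zero => simp
  | succ m ih =>
    have hstrip := (hP.isZigzagStrip (Nat.lt_of_succ_le hkn) ha).card_outer
    rw [card_filter_stripOuter] at hstrip
    have := ih (by omega)
    simp only [Nat.add_sub_cancel, card_filter, sum_range_succ] at hstrip this ⊢
    omega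

end TofP

theorem Hc_lt_Hc_iff {n i j i' j' k : ℕ} : Hc n i j k < Hc n i' j' k ↔ i * n + j < i' * n + j' := by
  unfold Hc
  omega

theorem Hc_succ_lt_Hc_iff {n i j i' j' m : ℕ} :
    Hc n i j (m + 1) < Hc n i' j' m ↔ i * n + j ≤ i' * n + j' := by
  unfold Hc
  push_cast
  omega

theorem Hc_lt_Hc_succ_iff {n i j i' j' m : ℕ} :
    Hc n i j m < Hc n i' j' (m + 1) ↔ i * n + j < i' * n + j' := by
  unfold Hc
  push_cast
  omega

section Interlacing

variable {n : ℕ} {P : ℕ → ℕ → ℕ → ℕ} {m i j : ℕ}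

/-- `i * (m + 1) + j - 2 * (m + 1)` is the reading index of `T^(i)_(j,m+1)` minus `m`, i.e. its
position on the outer path of the strip. -/
theorem TofP_succ_eq_stripOuter (hmn : m < n) (hj : 1 ≤ j) (hjm : j ≤ m + 1)
    (hij : i = 1 ∧ j = m + 1 ∨ i = 2 ∨ i = 3 ∧ j = 1) :
    TofP n P i j (m + 1) = stripOuter P m (i * (m + 1) + j - 2 * (m + 1)) := by
  rcases hij with ⟨rfl, rfl⟩ | rfl | ⟨rfl, rfl⟩
  · rw [TofP_one hj le_rfl hmn, show 1 * (m + 1) + (m + 1) - 2 * (m + 1) = 0 by omega]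
    simp [stripOuter]
  · rw [TofP_two hj hjm hmn, show 2 * (m + 1) + j - 2 * (m + 1) = j - 1 + 1 by omega,
      stripOuter_succ P (by omega), show m + 1 - j = m - (j - 1) by omega]
  · rw [TofP_three le_rfl (by omega) hmn, show 3 * (m + 1) + 1 - 2 * (m + 1) = m + 2 by omega]
    simp [stripOuter]

theorem IsPuzzle123.exists_TofP_between (hP : IsPuzzle123 n P) (hmn : m < n) {i' j' : ℕ}
    (hi : 1 ≤ i) (hi3 : i ≤ 3) (hj : 1 ≤ j) (hjm : j ≤ m + 1)
    (hi' : 1 ≤ i') (hi'3 : i' ≤ 3) (hj' : 1 ≤ j') (hj'm : j' ≤ m + 1)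
    (heq : TofP n P i j (m + 1) = TofP n P i' j' (m + 1)) (hlt : i * n + j < i' * n + j') :
    ∃ i'' j'', 1 ≤ i'' ∧ i'' ≤ 3 ∧ 1 ≤ j'' ∧ j'' ≤ m ∧ TofP n P i'' j'' m = TofP n P i j (m + 1) ∧
      i * n + j ≤ i'' * n + j'' ∧ i'' * n + j'' < i' * n + j' := by
  by_cases hL : i = 1 ∧ j ≤ m
  · obtain ⟨rfl, hjm'⟩ := hL
    refine ⟨1, j, le_rfl, by norm_num, hj, hjm', ?_, le_rfl, hlt⟩
    rw [TofP_one hj hjm' hmn.le, TofP_one hj hjm hmn]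
  by_cases hB : i' = 3 ∧ 2 ≤ j'
  · obtain ⟨rfl, hj'2⟩ := hB
    refine ⟨3, j' - 1, by norm_num, le_rfl, by omega, by omega, ?_, by omega, by omega⟩
    rw [heq, TofP_three (by omega) (by omega) hmn.le, TofP_three hj' hj'm hmn,
      show m - (j' - 1) = m + 1 - j' by omega]
  -- both entries now lie on the outer path of the strip between `Δ_m` and `Δ_{m+1}`
  have hij : i = 1 ∧ j = m + 1 ∨ i = 2 := by interval_cases i <;> interval_cases i' <;> omega
  have hij' : i' = 2 ∨ i' = 3 ∧ j' = 1 := by interval_cases i <;> interval_cases i' <;> omega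
  have hpq : i * (m + 1) + j - 2 * (m + 1) < i' * (m + 1) + j' - 2 * (m + 1) := by
    rcases hij with ⟨rfl, rfl⟩ | rfl <;> rcases hij' with rfl | ⟨rfl, rfl⟩ <;> omega
  have hqm : i' * (m + 1) + j' - 2 * (m + 1) ≤ m + 2 := by
    rcases hij' with rfl | ⟨rfl, rfl⟩ <;> omega
  obtain ⟨z, hzm, hpz, hzq, hz⟩ :=
    (hP.isZigzagStrip hmn (TofP_mem hP hi hi3 hj hjm hmn)).exists_inner_between
      (TofP_succ_eq_stripOuter hmn hj hjm (by tauto)).symm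
      ((TofP_succ_eq_stripOuter hmn hj' hj'm (by tauto)).symm.trans heq.symm) hpq hqm
  refine ⟨2, z + 1, by norm_num, by norm_num, by omega, by omega, ?_, ?_, ?_⟩
  · rw [TofP_two (by omega) (by omega) hmn.le, Nat.add_sub_cancel,
      show m - (z + 1) = m - 1 - z by omega]
    exact hz
  · rcases hij with ⟨rfl, rfl⟩ | rfl <;> omega
  · rcases hij' with rfl | ⟨rfl, rfl⟩ <;> omega

end Interlacing

theorem TofP_isITA_general (n : ℕ) (P : ℕ → ℕ → ℕ → ℕ)
    (hP : IsPuzzle123 n P) : IsITA 3 n (TofP n P) := by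
  refine ⟨fun i j k hi hi3 hj hjk hkn => TofP_mem hP hi hi3 hj hjk hkn,
    fun k _ hkn a ha => hP.card_filter_TofP_eq hkn ha, ?_⟩
  intro k hk hkn i j i' j' hi hi3 hj hjk hi' hi'3 hj' hj'k heq hlt
  obtain ⟨m, rfl⟩ : ∃ m, k = m + 1 := ⟨k - 1, by omega⟩
  obtain ⟨i'', j'', hi'', hi''3, hj'', hj''m, heq'', hle, hlt''⟩ :=
    hP.exists_TofP_between hkn hi hi3 hj hjk hi' hi'3 hj' hj'k heq (Hc_lt_Hc_iff.mp hlt)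
  rw [Nat.add_sub_cancel]
  exact ⟨i'', j'', hi'', hi''3, hj'', hj''m, heq'', Hc_succ_lt_Hc_iff.mpr hle,
    Hc_lt_Hc_succ_iff.mpr hlt''⟩

/-- For every `n ≥ 1` and every `1/2/3`-puzzle `P` on `Δ_n`, the array `𝒯(P)` is an
interlacing triangular array of rank `3` and height `n`. -/
theorem TofP_isITA (n : ℕ) (hn : 1 ≤ n) (P : ℕ → ℕ → ℕ → ℕ)
    (hP : IsPuzzle123 n P) : IsITA 3 n (TofP n P) :=
  TofP_isITA_general n P hP
end

section
/- Let k ≥ 1 and suppose the tuples a = (a_0,a_1,…,a_{k+1}) ∈ {1,2,3}^{k+2} and b = (b_1,…,b_{k−1}) ∈ {1,2,3}^{k−1} are interlacing. Then there exists a unique labeling of the 2k−2 internal slanted edges of the one-row triangular strip of length k by {1,2,3}, where the boundary is labeled so that the upper edges carry a_1,…,a_k, the left and right outer slanted edges carry a_0 and a_{k+1}, and the lower edges carry b_1,…,b_{k−1}, such that the three edges of every one of the 2k−1 triangular faces receive three pairwise distinct labels. -/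
/-!
Walking along the strip from left to right, every face already has two of its labels fixed
when it is reached, so the label of its next slanted edge is forced to be the remaining colour.
This gives uniqueness, and existence amounts to showing that the forced labels never clash with
the upper or lower edge of the next face, and that the last one is `a (k + 1)`.

Both follow from one invariant: after the `t`-th downward triangle, the multiset
`{a 0, …, a t}` equals `{b 1, …, b t}` plus the current slanted label. Interlacing enters only
through its counting form: every window `a s, …, a t` contains at most one more `i` than
`b s, …, b (t - 1)`, because between two consecutive occurrences of `i` in `a` there is one in
`b`. A clash would violate this for a prefix or a suffix window, and the total count
`#a = #b + 1` leaves `a (k + 1)` as the only possible last label.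
-/

/-- The tuples `(a 0, …, a (k+1))` and `(b 1, …, b (k-1))`, with entries in `{1,2,3}`,
are interlacing: for each value `i ∈ {1,2,3}`, `a` contains exactly one more
occurrence of `i` than `b`, and between any two consecutive occurrences of `i` in `a`,
at positions `p < q`, there is an occurrence `b r = i` with `p ≤ r < q`.
(Equivalently, the occurrence positions `j_0 < ⋯ < j_m` of `i` in `a` and
`k_1 < ⋯ < k_m` in `b` satisfy `j_0 ≤ k_1 < j_1 ≤ k_2 < ⋯ ≤ k_m < j_m`.) -/
def InterlacingAB (k : ℕ) (a b : ℕ → ℕ) : Prop :=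
  ∀ i ∈ Finset.Icc 1 3,
    (((Finset.range (k + 2)).filter (fun p => a p = i)).card
        = ((Finset.Icc 1 (k - 1)).filter (fun p => b p = i)).card + 1) ∧
    (∀ p q, p < q → q ≤ k + 1 → a p = i → a q = i →
        (∀ r, p < r → r < q → a r ≠ i) →
        ∃ r, 1 ≤ r ∧ r ≤ k - 1 ∧ p ≤ r ∧ r < q ∧ b r = i)

open Finset Nat

def third (x y : ℕ) : ℕ := 6 - (x + y)

def Rainbow (x y z : ℕ) : Prop := x ≠ y ∧ y ≠ z ∧ x ≠ z

section ThreeLabels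

variable {x y z i : ℕ}

lemma third_mem (hx : x ∈ Icc 1 3) (hy : y ∈ Icc 1 3) (hxy : x ≠ y) :
    third x y ∈ Icc 1 3 := by
  simp only [mem_Icc, third] at *; omega

lemma rainbow_third (hx : x ∈ Icc 1 3) (hy : y ∈ Icc 1 3) (hxy : x ≠ y) :
    Rainbow y x (third x y) := by
  simp only [mem_Icc, third, Rainbow] at *; omega

lemma eq_third_of_rainbow (hx : x ∈ Icc 1 3) (hy : y ∈ Icc 1 3) (hz : z ∈ Icc 1 3)
    (h : Rainbow y x z) : z = third x y := by
  simp only [mem_Icc, third, Rainbow] at *; omega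

lemma ite_add_ite_add_ite_third (hx : x ∈ Icc 1 3) (hy : y ∈ Icc 1 3) (hi : i ∈ Icc 1 3)
    (hxy : x ≠ y) :
    ((if x = i then 1 else 0) + (if y = i then 1 else 0) + if third x y = i then 1 else 0) = 1 := by
  simp only [mem_Icc] at *; split_ifs <;> simp only [third] at * <;> omega

end ThreeLabels

def chainLabel (x₀ : ℕ) (c : ℕ → ℕ) : ℕ → ℕ
  | 0 => x₀
  | n + 1 => third (c n) (chainLabel x₀ c n)

section Chain

variable {x y N : ℕ} {c : ℕ → ℕ}

lemma chainLabel_mem (hx : x ∈ Icc 1 3)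
    (hc : ∀ n ≤ N, c n ∈ Icc 1 3 ∧ c n ≠ chainLabel x c n) :
    ∀ n ≤ N + 1, chainLabel x c n ∈ Icc 1 3
  | 0, _ => hx
  | n + 1, _ =>
    third_mem (hc n (by omega)).1 (chainLabel_mem hx hc n (by omega)) (hc n (by omega)).2

lemma eq_chainLabel_of_rainbow (hx : x ∈ Icc 1 3)
    (hc : ∀ n ≤ N, c n ∈ Icc 1 3 ∧ c n ≠ chainLabel x c n) {e : ℕ → ℕ} (h0 : e 0 = x)
    (hN : e (N + 1) = chainLabel x c (N + 1)) (he : ∀ n, 1 ≤ n → n ≤ N → e n ∈ Icc 1 3)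
    (h : ∀ n ≤ N, Rainbow (e n) (c n) (e (n + 1))) :
    ∀ n ≤ N + 1, e n = chainLabel x c n
  | 0, _ => h0
  | n + 1, hn => by
    have ih := eq_chainLabel_of_rainbow hx hc h0 hN he h n (by omega)
    rcases (show n + 1 ≤ N ∨ n = N by omega) with hlt | rfl
    · have hrainbow := h n (by omega)
      rw [ih] at hrainbow
      exact eq_third_of_rainbow (hc n (by omega)).1 (chainLabel_mem hx hc n (by omega))
        (he _ (by omega) hlt) hrainbow
    · exact hN

theorem existsUnique_rainbow_chain (hx : x ∈ Icc 1 3)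
    (hc : ∀ n ≤ N, c n ∈ Icc 1 3 ∧ c n ≠ chainLabel x c n) (hy : chainLabel x c (N + 1) = y) :
    ∃! e : ℕ → ℕ, e 0 = x ∧ e (N + 1) = y ∧ (∀ n, 1 ≤ n → n ≤ N → e n ∈ Icc 1 3) ∧
      (∀ n, N + 1 < n → e n = 0) ∧ ∀ n ≤ N, Rainbow (e n) (c n) (e (n + 1)) := by
  have hmem := chainLabel_mem hx hc
  refine ⟨fun n => if n ≤ N + 1 then chainLabel x c n else 0,
    ⟨by simp [chainLabel], by simp [hy], fun n _ hn => ?_, fun n hn => ?_, fun n hn => ?_⟩, ?_⟩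
  · simpa [show n ≤ N + 1 by omega] using hmem n (by omega)
  · simp [show ¬n ≤ N + 1 by omega]
  · simpa [show n ≤ N + 1 by omega, hn, chainLabel] using
      rainbow_third (hc n hn).1 (hmem n (by omega)) (hc n hn).2
  · rintro e ⟨h0, hN, he, hzero, h⟩
    have hchain := eq_chainLabel_of_rainbow hx hc h0 (hN.trans hy.symm) he h
    funext n
    by_cases hn : n ≤ N + 1
    · simp [hn, hchain n hn]
    · simp [hn, hzero n (by omega)]

end Chain

section Counting

variable {P Q : ℕ → Prop} [DecidablePred P] [DecidablePred Q]

lemma count_eq_count_of_forall_not {s t : ℕ} (hst : s ≤ t) (h : ∀ m, s ≤ m → m < t → ¬P m) :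
    count P t = count P s := by
  refine le_antisymm (not_lt.1 fun hlt => ?_) (count_monotone P hst)
  obtain ⟨m, hm, hPm⟩ := exists_of_count_lt_count hlt
  exact h m hm.1 hm.2 hPm

theorem count_window_le_of_separated {n : ℕ}
    (hsep : ∀ p q, p < q → q ≤ n → P p → P q → (∀ r, p < r → r < q → ¬P r) →
      ∃ r, p ≤ r ∧ r < q ∧ Q r)
    {s t : ℕ} (hst : s ≤ t) (htn : t ≤ n) :
    count P (t + 1) + count Q s ≤ count P s + count Q t + 1 := by
  induction t using Nat.strong_induction_on with
  | _ t ih =>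
  by_cases hprev : ∃ m, s ≤ m ∧ m < t ∧ P m
  · obtain ⟨m, hsm, hmt, hPm⟩ := hprev
    -- `p` is the last occurrence of `P` before `t`; the `Q` separating `p` from `t` pays for `P t`.
    set p := Nat.findGreatest P (t - 1)
    have hmp : m ≤ p := le_findGreatest (by omega) hPm
    have hpt : p < t := by have := findGreatest_le (P := P) (t - 1); omega
    have hPp : P p := findGreatest_spec (m := m) (by omega) hPm
    have hgap : ∀ r, p < r → r < t → ¬P r := fun r h1 h2 => findGreatest_is_greatest h1 (by omega)
    have hp := ih p hpt (by omega) (by omega)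
    have hPeq : count P t = count P (p + 1) := count_eq_count_of_forall_not hpt hgap
    rw [count_succ]
    by_cases hPt : P t
    · obtain ⟨r, hpr, hrt, hQr⟩ := hsep p t hpt htn hPp hPt hgap
      have : count Q p < count Q t := (count_monotone Q hpr).trans_lt (count_strict_mono hQr hrt)
      simp only [hPt, if_true]; omega
    · have := count_monotone Q hpt.le
      simp only [hPt, if_false]; omega
  · have hPeq := count_eq_count_of_forall_not hst fun m h1 h2 hPm => hprev ⟨m, h1, h2, hPm⟩
    have := count_monotone Q hst
    rw [count_succ]; split_ifs <;> omega

end Counting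

/-- `b` is only meaningful on the lower edges `1, …, k - 1`. -/
abbrev LowerLabelAt (k : ℕ) (b : ℕ → ℕ) (i r : ℕ) : Prop := 1 ≤ r ∧ r ≤ k - 1 ∧ b r = i

namespace InterlacingAB

variable {k : ℕ} {a b : ℕ → ℕ} {i : ℕ}

lemma count_upper_eq (hab : InterlacingAB k a b) (hi : i ∈ Icc 1 3) :
    count (a · = i) (k + 2) = count (LowerLabelAt k b i) k + 1 := by
  rw [count_eq_card_filter_range, count_eq_card_filter_range, (hab i hi).1]
  congr 2
  ext r
  simp only [mem_filter, mem_Icc, mem_range]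
  omega

lemma count_window_le (hab : InterlacingAB k a b) (hi : i ∈ Icc 1 3) {s t : ℕ} (hst : s ≤ t)
    (ht : t ≤ k + 1) :
    count (a · = i) (t + 1) + count (LowerLabelAt k b i) s ≤
      count (a · = i) s + count (LowerLabelAt k b i) t + 1 := by
  refine count_window_le_of_separated (fun p q hpq hq hp hq' hgap => ?_) hst ht
  obtain ⟨r, h1, h2, h3, h4, h5⟩ := (hab i hi).2 p q hpq hq hp hq' hgap
  exact ⟨r, h3, h4, h1, h2, h5⟩

lemma count_upper_le (hab : InterlacingAB k a b) (hi : i ∈ Icc 1 3) {t : ℕ} (ht : t ≤ k) :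
    count (a · = i) (t + 1) ≤ count (LowerLabelAt k b i) t + 1 := by
  simpa using hab.count_window_le hi (Nat.zero_le t) (by omega)

lemma count_lower_le (hab : InterlacingAB k a b) (hi : i ∈ Icc 1 3) {t : ℕ} (ht : t ≤ k) :
    count (LowerLabelAt k b i) t ≤ count (a · = i) t := by
  have hwindow : count (a · = i) (k + 2) + count (LowerLabelAt k b i) t ≤
      count (a · = i) t + count (LowerLabelAt k b i) (k + 1) + 1 :=
    hab.count_window_le hi (by omega) le_rfl
  have hk : count (LowerLabelAt k b i) (k + 1) = count (LowerLabelAt k b i) k := by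
    rw [count_succ_eq_count_iff]; omega
  have := hab.count_upper_eq hi
  omega

end InterlacingAB

/-- As multisets, `{a 0, …, a t} = {b 1, …, b t} + {g}`. -/
def PrefixBalanced (k : ℕ) (a b : ℕ → ℕ) (t g : ℕ) : Prop :=
  ∀ i ∈ Icc 1 3,
    count (a · = i) (t + 1) = count (LowerLabelAt k b i) (t + 1) + if g = i then 1 else 0

namespace PrefixBalanced

variable {k : ℕ} {a b : ℕ → ℕ} {t g : ℕ}

lemma zero : PrefixBalanced k a b 0 (a 0) := by
  intro i _
  simp [count_one]

lemma upper_ne (h : PrefixBalanced k a b t g) (hab : InterlacingAB k a b) (ha : a (t + 1) ∈ Icc 1 3)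
    (ht : t + 1 ≤ k) : a (t + 1) ≠ g := by
  intro hag
  have hle := hab.count_upper_le ha ht
  have hbal := h _ ha
  rw [count_succ, if_pos rfl] at hle
  rw [if_pos hag.symm] at hbal
  omega

lemma lower_ne (h : PrefixBalanced k a b t g) (hab : InterlacingAB k a b) (hg : g ∈ Icc 1 3)
    (ha : a (t + 1) ∈ Icc 1 3) (hag : a (t + 1) ≠ g) (ht : t + 1 ≤ k - 1) :
    b (t + 1) ≠ third (a (t + 1)) g := by
  intro hb
  have hi := third_mem ha hg hag
  have hle := hab.count_lower_le hi (t := t + 1 + 1) (by omega)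
  have hbal := h _ hi
  obtain ⟨-, hai, hgi⟩ := rainbow_third ha hg hag
  rw [count_succ (LowerLabelAt k b _), count_succ (a · = _), if_pos ⟨by omega, ht, hb⟩,
    if_neg hai] at hle
  rw [if_neg hgi] at hbal
  omega

lemma succ (h : PrefixBalanced k a b t g) (hg : g ∈ Icc 1 3) (ha : a (t + 1) ∈ Icc 1 3)
    (hb : b (t + 1) ∈ Icc 1 3) (hag : a (t + 1) ≠ g) (hbh : b (t + 1) ≠ third (a (t + 1)) g)
    (ht : t + 1 ≤ k - 1) :
    PrefixBalanced k a b (t + 1) (third (b (t + 1)) (third (a (t + 1)) g)) := by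
  intro i hi
  have hup := ite_add_ite_add_ite_third ha hg hi hag
  have hdown := ite_add_ite_add_ite_third hb (third_mem ha hg hag) hi hbh
  rw [count_succ, count_succ (LowerLabelAt k b i), h i hi]
  simp only [LowerLabelAt, show 1 ≤ t + 1 by omega, ht, true_and]
  omega

lemma upper_last (h : PrefixBalanced k a b (k - 1) g) (hab : InterlacingAB k a b) (hk : 1 ≤ k)
    (hg : g ∈ Icc 1 3) (ha : ∀ p, p ≤ k + 1 → a p ∈ Icc 1 3) (hag : a k ≠ g) :
    a (k + 1) = third (a k) g := by
  have hi := ha (k + 1) le_rfl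
  have hcount := hab.count_upper_eq hi
  have hbal := h _ hi
  rw [Nat.sub_add_cancel hk] at hbal
  rw [count_succ, count_succ, if_pos rfl, hbal] at hcount
  refine eq_third_of_rainbow (ha k (by omega)) hg hi ⟨hag.symm, ?_, ?_⟩
  all_goals intro heq; simp [heq] at hcount; omega

end PrefixBalanced

/-- Face `n` of the strip lies between the slanted edges `n` and `n + 1`; its third edge is the
upper edge `a (n / 2 + 1)` for even `n` and the lower edge `b ((n + 1) / 2)` for odd `n`. -/
def faceLabel (a b : ℕ → ℕ) (n : ℕ) : ℕ := if n % 2 = 0 then a (n / 2 + 1) else b ((n + 1) / 2)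

@[simp]
lemma faceLabel_two_mul (a b : ℕ → ℕ) (t : ℕ) : faceLabel a b (2 * t) = a (t + 1) := by
  simp [faceLabel]

@[simp]
lemma faceLabel_two_mul_add_one (a b : ℕ → ℕ) (t : ℕ) : faceLabel a b (2 * t + 1) = b (t + 1) := by
  simp [faceLabel]; congr 1; omega

lemma rainbow_faceLabel_iff (k : ℕ) (hk : 1 ≤ k) (a b e : ℕ → ℕ) :
    ((∀ t, 1 ≤ t → t ≤ k →
        e (2 * t - 2) ≠ a t ∧ a t ≠ e (2 * t - 1) ∧ e (2 * t - 2) ≠ e (2 * t - 1)) ∧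
      (∀ t, 1 ≤ t → t ≤ k - 1 →
        e (2 * t - 1) ≠ b t ∧ b t ≠ e (2 * t) ∧ e (2 * t - 1) ≠ e (2 * t))) ↔
      ∀ n ≤ 2 * k - 2, Rainbow (e n) (faceLabel a b n) (e (n + 1)) := by
  constructor
  · rintro ⟨hup, hdown⟩ n hn
    obtain ⟨t, rfl | rfl⟩ := Nat.even_or_odd' n
    · have h := hup (t + 1) (by omega) (by omega)
      rwa [show 2 * (t + 1) - 2 = 2 * t by omega, show 2 * (t + 1) - 1 = 2 * t + 1 by omega,
        ← faceLabel_two_mul a b] at h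
    · have h := hdown (t + 1) (by omega) (by omega)
      rwa [show 2 * (t + 1) - 1 = 2 * t + 1 by omega, ← faceLabel_two_mul_add_one a b] at h
  · intro h
    refine ⟨fun t h1 h2 => ?_, fun t h1 h2 => ?_⟩
    · obtain ⟨s, rfl⟩ : ∃ s, t = s + 1 := ⟨t - 1, by omega⟩
      have := h (2 * s) (by omega)
      rwa [faceLabel_two_mul, show 2 * s + 1 = 2 * (s + 1) - 1 by omega,
        show 2 * s = 2 * (s + 1) - 2 by omega] at this
    · obtain ⟨s, rfl⟩ : ∃ s, t = s + 1 := ⟨t - 1, by omega⟩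
      have := h (2 * s + 1) (by omega)
      rwa [faceLabel_two_mul_add_one, show 2 * s + 1 = 2 * (s + 1) - 1 by omega,
        show 2 * (s + 1) - 1 + 1 = 2 * (s + 1) by omega] at this

lemma chainLabel_two_mul_add_one (a b : ℕ → ℕ) (t : ℕ) :
    chainLabel (a 0) (faceLabel a b) (2 * t + 1) =
      third (a (t + 1)) (chainLabel (a 0) (faceLabel a b) (2 * t)) := by
  rw [chainLabel, faceLabel_two_mul]

lemma chainLabel_two_mul_add_two (a b : ℕ → ℕ) (t : ℕ) :
    chainLabel (a 0) (faceLabel a b) (2 * (t + 1)) =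
      third (b (t + 1)) (chainLabel (a 0) (faceLabel a b) (2 * t + 1)) := by
  rw [show 2 * (t + 1) = 2 * t + 1 + 1 by ring, chainLabel, faceLabel_two_mul_add_one]

namespace InterlacingAB

variable {k : ℕ} {a b : ℕ → ℕ}

theorem prefixBalanced_chainLabel (hab : InterlacingAB k a b)
    (ha : ∀ p, p ≤ k + 1 → a p ∈ Icc 1 3) (hb : ∀ p, 1 ≤ p → p ≤ k - 1 → b p ∈ Icc 1 3) :
    ∀ t ≤ k - 1, chainLabel (a 0) (faceLabel a b) (2 * t) ∈ Icc 1 3 ∧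
      PrefixBalanced k a b t (chainLabel (a 0) (faceLabel a b) (2 * t))
  | 0, _ => ⟨ha 0 (by omega), PrefixBalanced.zero⟩
  | t + 1, ht => by
    obtain ⟨hg, hbal⟩ := prefixBalanced_chainLabel hab ha hb t (by omega)
    have hat := ha (t + 1) (by omega)
    have hbt := hb (t + 1) (by omega) ht
    have hag := hbal.upper_ne hab hat (by omega)
    have hbh := hbal.lower_ne hab hg hat hag ht
    rw [chainLabel_two_mul_add_two, chainLabel_two_mul_add_one]
    exact ⟨third_mem hbt (third_mem hat hg hag) hbh, hbal.succ hg hat hbt hag hbh ht⟩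

theorem faceLabel_ne_chainLabel (hab : InterlacingAB k a b) (hk : 1 ≤ k)
    (ha : ∀ p, p ≤ k + 1 → a p ∈ Icc 1 3) (hb : ∀ p, 1 ≤ p → p ≤ k - 1 → b p ∈ Icc 1 3) :
    ∀ n ≤ 2 * k - 2, faceLabel a b n ∈ Icc 1 3 ∧
      faceLabel a b n ≠ chainLabel (a 0) (faceLabel a b) n := by
  intro n hn
  obtain ⟨t, rfl | rfl⟩ := Nat.even_or_odd' n
  · obtain ⟨-, hbal⟩ := hab.prefixBalanced_chainLabel ha hb t (by omega)
    rw [faceLabel_two_mul]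
    exact ⟨ha (t + 1) (by omega), hbal.upper_ne hab (ha (t + 1) (by omega)) (by omega)⟩
  · obtain ⟨hg, hbal⟩ := hab.prefixBalanced_chainLabel ha hb t (by omega)
    have hat := ha (t + 1) (by omega)
    rw [faceLabel_two_mul_add_one, chainLabel_two_mul_add_one]
    exact ⟨hb (t + 1) (by omega) (by omega),
      hbal.lower_ne hab hg hat (hbal.upper_ne hab hat (by omega)) (by omega)⟩

theorem chainLabel_end (hab : InterlacingAB k a b) (hk : 1 ≤ k)
    (ha : ∀ p, p ≤ k + 1 → a p ∈ Icc 1 3) (hb : ∀ p, 1 ≤ p → p ≤ k - 1 → b p ∈ Icc 1 3) :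
    chainLabel (a 0) (faceLabel a b) (2 * k - 2 + 1) = a (k + 1) := by
  obtain ⟨hg, hbal⟩ := hab.prefixBalanced_chainLabel ha hb (k - 1) le_rfl
  have hak := hbal.upper_ne hab (ha (k - 1 + 1) (by omega)) (by omega)
  rw [show 2 * k - 2 = 2 * (k - 1) by omega, chainLabel_two_mul_add_one]
  rw [Nat.sub_add_cancel hk] at hak ⊢
  exact (hbal.upper_last hab hk hg ha hak).symm

end InterlacingAB

/-- If `(a_0,…,a_(k+1))` and `(b_1,…,b_(k-1))` are interlacing tuples with entries in
`{1,2,3}`, there is a unique proper labeling of the `2k-2` internal slanted edges of the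
one-row triangular strip of length `k`.  The slanted edges are `e 0, …, e (2k-1)` from
left to right: the `t`-th upward triangle (`1 ≤ t ≤ k`) has slanted edges `e (2t-2)`,
`e (2t-1)` and upper edge `a t`; the `t`-th downward triangle (`1 ≤ t ≤ k-1`) has
slanted edges `e (2t-1)`, `e (2t)` and lower edge `b t`; the outer slanted edges are
fixed: `e 0 = a 0` and `e (2k-1) = a (k+1)`; every face must have three pairwise
distinct labels.  (Labelings are normalized to `0` outside `{0,…,2k-1}`.) -/
theorem one_row_unique_labeling (k : ℕ) (hk : 1 ≤ k) (a b : ℕ → ℕ)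
    (ha : ∀ p, p ≤ k + 1 → a p ∈ Finset.Icc 1 3)
    (hb : ∀ p, 1 ≤ p → p ≤ k - 1 → b p ∈ Finset.Icc 1 3)
    (hab : InterlacingAB k a b) :
    ∃! e : ℕ → ℕ,
      e 0 = a 0 ∧ e (2 * k - 1) = a (k + 1) ∧
      (∀ t, 1 ≤ t → t ≤ 2 * k - 2 → e t ∈ Finset.Icc 1 3) ∧
      (∀ t, 2 * k - 1 < t → e t = 0) ∧
      (∀ t, 1 ≤ t → t ≤ k →
          e (2 * t - 2) ≠ a t ∧ a t ≠ e (2 * t - 1) ∧ e (2 * t - 2) ≠ e (2 * t - 1)) ∧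
      (∀ t, 1 ≤ t → t ≤ k - 1 →
          e (2 * t - 1) ≠ b t ∧ b t ≠ e (2 * t) ∧ e (2 * t - 1) ≠ e (2 * t)) := by
  rw [show 2 * k - 1 = 2 * k - 2 + 1 by omega]
  simp only [rainbow_faceLabel_iff k hk a b]
  exact existsUnique_rainbow_chain (ha 0 (by omega)) (hab.faceLabel_ne_chainLabel hk ha hb)
    (hab.chainLabel_end hk ha hb)
end

section
/- Let k ≥ 2 and suppose a = (a_0,a_1,…,a_{k+1}) ∈ {1,2,3}^{k+2} and b = (b_1,…,b_{k−1}) ∈ {1,2,3}^{k−1} are interlacing. Then a_0 ≠ a_1 and a_k ≠ a_{k+1}; moreover, letting b_0 be the unique element of {1,2,3} ∖ {a_0,a_1} and b_k the unique element of {1,2,3} ∖ {a_k,a_{k+1}}, the tuples b' = (b_0,b_1,…,b_k) ∈ {1,2,3}^{k+1} and a' = (a_2,…,a_{k−1}) ∈ {1,2,3}^{k−2} are interlacing. -/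
/-!
Fix a value `i` and let `S`, `T` be its positions in `a` and in `b`. The gap condition says that
`T` separates consecutive elements of `S`; by induction on the largest element this gives
`#(S ∩ [x, y]) ≤ #(T ∩ [x, y)) + 1` on every window. Combined with `#S = #T + 1`, it yields the
converse separation: `S` meets `(p, q]` for any `p < q` in `T`, meets `[0, q]` for `q ∈ T`,
and meets `(p, ∞)` for `p ∈ T`. This is the gap condition of `(b', a')`, with `b₀` and `b_k`
in the roles of the missing ends: if `b₀ = i` then `a₀, a₁ ≠ i`, so the element of `S` found lies
in `[2, k - 1]`. The counts of `(b', a')` match because exactly one of `b₀, a₀, a₁` (and of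
`b_k, a_k, a_{k+1}`) equals `i`. Adjacent equal entries `a_p = a_{p+1}` would need `b_p = a_p`,
impossible at `p = 0` and `p = k`.
-/

open Finset

def IsSeparatedBy (S T : Finset ℕ) : Prop :=
  ∀ p ∈ S, ∀ q ∈ S, p < q → (∀ r ∈ S, r ≤ p ∨ q ≤ r) → ∃ t ∈ T, p ≤ t ∧ t < q

namespace IsSeparatedBy

variable {S T : Finset ℕ}

theorem filter (h : IsSeparatedBy S T) {P : ℕ → Prop} [DecidablePred P]
    (hP : {s | P s}.OrdConnected) : IsSeparatedBy (S.filter P) T := by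
  intro p hp q hq hpq hcons
  rw [mem_filter] at hp hq
  refine h p hp.1 q hq.1 hpq fun r hr => ?_
  by_contra! hr'
  have hPr : P r := hP.out hp.2 hq.2 ⟨hr'.1.le, hr'.2.le⟩
  have := hcons r (mem_filter.2 ⟨hr, hPr⟩)
  omega

theorem of_insert {m : ℕ} (h : IsSeparatedBy (insert m S) T) (hm : ∀ s ∈ S, s < m) :
    IsSeparatedBy S T := by
  intro p hp q hq hpq hcons
  refine h p (mem_insert_of_mem hp) q (mem_insert_of_mem hq) hpq fun r hr => ?_
  rcases mem_insert.1 hr with rfl | hr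
  · exact Or.inr (hm q hq).le
  · exact hcons r hr

theorem card_le_card_filter_add_one (h : IsSeparatedBy S T) {x y : ℕ}
    (hS : ∀ s ∈ S, x ≤ s ∧ s ≤ y) : #S ≤ #(T.filter fun t => x ≤ t ∧ t < y) + 1 := by
  induction S using Finset.induction_on_max generalizing y with
  | empty => simp
  | insert m U hm ih =>
    rw [card_insert_of_notMem fun hmU => (hm m hmU).false]
    rcases U.eq_empty_or_nonempty with rfl | hU
    · simp
    set m' := U.max' hU
    have hm'U : m' ∈ U := U.max'_mem hU
    obtain ⟨t, ht, hm't, htm⟩ := h m' (mem_insert_of_mem hm'U) m (mem_insert_self m U) (hm m' hm'U)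
      fun r hr => by
        rcases mem_insert.1 hr with rfl | hr
        · exact Or.inr le_rfl
        · exact Or.inl (U.le_max' r hr)
    have hIH := ih (y := m') (h.of_insert hm) fun s hs =>
      ⟨(hS s (mem_insert_of_mem hs)).1, U.le_max' s hs⟩
    have hxm' := (hS m' (mem_insert_of_mem hm'U)).1
    have hmy := (hS m (mem_insert_self m U)).2
    have hlt : #(T.filter fun t => x ≤ t ∧ t < m') < #(T.filter fun t => x ≤ t ∧ t < y) := by
      refine card_lt_card ((ssubset_iff_of_subset ?_).2 ⟨t, ?_, ?_⟩)
      · exact monotone_filter_right _ fun s _ hs => ⟨hs.1, by omega⟩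
      · exact mem_filter.2 ⟨ht, by omega, by omega⟩
      · simp only [mem_filter, not_and, not_lt]
        exact fun _ _ => hm't
    omega

theorem card_filter_le_le (h : IsSeparatedBy S T) (x : ℕ) :
    #(S.filter (· ≤ x)) ≤ #(T.filter (· < x)) + 1 := by
  simpa using (h.filter Set.ordConnected_Iic).card_le_card_filter_add_one (x := 0) (y := x)
    fun s hs => ⟨Nat.zero_le s, (mem_filter.1 hs).2⟩

theorem card_filter_lt_le (h : IsSeparatedBy S T) (x : ℕ) :
    #(S.filter (x < ·)) ≤ #(T.filter (x < ·)) + 1 := by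
  calc #(S.filter (x < ·))
      ≤ #(T.filter fun t => x + 1 ≤ t ∧ t < S.sup id) + 1 :=
        (h.filter Set.ordConnected_Ioi).card_le_card_filter_add_one fun s hs =>
          ⟨(mem_filter.1 hs).2, le_sup (f := id) (mem_filter.1 hs).1⟩
    _ ≤ #(T.filter (x < ·)) + 1 := by
        gcongr with t
        exact fun ht => ht.1

theorem card_filter_le_le_of_mem (h : IsSeparatedBy S T) {p : ℕ} (hp : p ∈ T) :
    #(S.filter (· ≤ p)) ≤ #(T.filter (· ≤ p)) := by
  refine (h.card_filter_le_le p).trans (card_lt_card ((ssubset_iff_of_subset ?_).2 ⟨p, ?_, ?_⟩))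
  · exact monotone_filter_right _ fun t _ ht => ht.le
  · exact mem_filter.2 ⟨hp, le_rfl⟩
  · simp

theorem card_filter_le_le_of_card_eq (h : IsSeparatedBy S T) (hc : #S = #T + 1) (x : ℕ) :
    #(T.filter (· ≤ x)) ≤ #(S.filter (· ≤ x)) := by
  have hS := card_filter_add_card_filter_not (s := S) (· ≤ x)
  have hT := card_filter_add_card_filter_not (s := T) (· ≤ x)
  have := h.card_filter_lt_le x
  simp only [not_le] at hS hT
  omega

theorem exists_mem_Ioc (h : IsSeparatedBy S T) (hc : #S = #T + 1) {p q : ℕ} (hp : p ∈ T)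
    (hq : q ∈ T) (hpq : p < q) : ∃ s ∈ S, p < s ∧ s ≤ q := by
  have hT : #(T.filter (· ≤ p)) < #(T.filter (· ≤ q)) := by
    refine card_lt_card ((ssubset_iff_of_subset ?_).2 ⟨q, ?_, ?_⟩)
    · exact monotone_filter_right _ fun t _ ht => ht.trans hpq.le
    · exact mem_filter.2 ⟨hq, le_rfl⟩
    · simp [hpq]
  obtain ⟨s, hsq, hsp⟩ := exists_mem_notMem_of_card_lt_card <|
    (h.card_filter_le_le_of_mem hp).trans_lt (hT.trans_le (h.card_filter_le_le_of_card_eq hc q))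
  simp only [mem_filter, not_and, not_le] at hsq hsp
  exact ⟨s, hsq.1, hsp hsq.1, hsq.2⟩

theorem exists_mem_le (h : IsSeparatedBy S T) (hc : #S = #T + 1) {q : ℕ} (hq : q ∈ T) :
    ∃ s ∈ S, s ≤ q := by
  have hpos : 0 < #(T.filter (· ≤ q)) := card_pos.2 ⟨q, mem_filter.2 ⟨hq, le_rfl⟩⟩
  obtain ⟨s, hs⟩ := card_pos.1 (hpos.trans_le (h.card_filter_le_le_of_card_eq hc q))
  exact ⟨s, (mem_filter.1 hs).1, (mem_filter.1 hs).2⟩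

theorem exists_lt_mem (h : IsSeparatedBy S T) (hc : #S = #T + 1) {p : ℕ} (hp : p ∈ T) :
    ∃ s ∈ S, p < s := by
  have hlt : #(S.filter (· ≤ p)) < #S :=
    (h.card_filter_le_le_of_mem hp).trans_lt (by have := card_filter_le T (· ≤ p); omega)
  obtain ⟨s, hs, hsp⟩ := exists_mem_notMem_of_card_lt_card hlt
  exact ⟨s, hs, by simpa [hs] using hsp⟩

end IsSeparatedBy

theorem ite_add_ite_add_ite_eq_one {x y z i : ℕ} (hx : x ∈ Icc 1 3) (hy : y ∈ Icc 1 3)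
    (hz : z ∈ Icc 1 3) (hi : i ∈ Icc 1 3) (hxy : x ≠ y) (hxz : x ≠ z) (hyz : y ≠ z) :
    ((if x = i then 1 else 0) + (if y = i then 1 else 0) + if z = i then 1 else 0) = 1 := by
  simp only [mem_Icc] at hx hy hz hi
  split_ifs <;> omega

theorem sum_Icc_one_eq_sum_range {M : Type*} [AddCommMonoid M] (f : ℕ → M) (n : ℕ) :
    ∑ p ∈ Icc 1 n, f p = ∑ p ∈ range n, f (p + 1) := by
  induction n with
  | zero => rfl
  | succ n ih => rw [sum_Icc_succ_top (by omega), ih, sum_range_succ]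

def updateEnds (b : ℕ → ℕ) (k b0 bk : ℕ) (p : ℕ) : ℕ :=
  if p = 0 then b0 else if p = k then bk else b p

theorem card_filter_updateEnds {m i b0 bk : ℕ} {a b : ℕ → ℕ}
    (hc : #{p ∈ range (m + 4) | a p = i} = #{p ∈ Icc 1 (m + 1) | b p = i} + 1)
    (h0 : ((if b0 = i then 1 else 0) + (if a 0 = i then 1 else 0) + if a 1 = i then 1 else 0) = 1)
    (hk : ((if bk = i then 1 else 0) + (if a (m + 2) = i then 1 else 0) +
      if a (m + 3) = i then 1 else 0) = 1) :
    #{p ∈ range (m + 3) | updateEnds b (m + 2) b0 bk p = i} = #{p ∈ Icc 1 m | a (p + 1) = i} + 1 := by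
  have hmid : ∑ p ∈ range (m + 1), (if updateEnds b (m + 2) b0 bk (p + 1) = i then 1 else 0)
      = ∑ p ∈ range (m + 1), if b (p + 1) = i then 1 else 0 :=
    sum_congr rfl fun p hp => by
      rw [mem_range] at hp
      rw [updateEnds, if_neg p.succ_ne_zero, if_neg (show p + 1 ≠ m + 2 by omega)]
  simp only [card_filter, sum_Icc_one_eq_sum_range] at hc ⊢
  rw [sum_range_succ, sum_range_succ', hmid]
  rw [sum_range_succ, sum_range_succ, sum_range_succ', sum_range_succ', zero_add] at hc
  simp only [updateEnds, if_pos, if_neg (show m + 2 ≠ 0 by omega)]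
  omega

namespace InterlacingAB

variable {k : ℕ} {a b : ℕ → ℕ}

theorem isSeparatedBy (hab : InterlacingAB k a b) {i : ℕ} (hi : i ∈ Icc 1 3) :
    IsSeparatedBy {p ∈ range (k + 2) | a p = i} {p ∈ Icc 1 (k - 1) | b p = i} := by
  intro p hp q hq hpq hcons
  simp only [mem_filter, mem_range] at hp hq
  obtain ⟨r, hr1, hrk, hpr, hrq, hbr⟩ := (hab i hi).2 p q hpq (by omega) hp.2 hq.2 fun r hpr hrq har =>
    by have := hcons r (by simp [har]; omega); omega
  exact ⟨r, by simp [hr1, hrk, hbr], hpr, hrq⟩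

theorem apply_ne_apply_succ (hab : InterlacingAB k a b) {p : ℕ} (ha : a p ∈ Icc 1 3)
    (hp : p = 0 ∨ p = k) : a p ≠ a (p + 1) := fun h => by
  obtain ⟨r, hr1, hrk, hpr, hrp, -⟩ :=
    (hab (a p) ha).2 p (p + 1) p.lt_succ_self (by omega) rfl h.symm fun r _ _ => by omega
  omega

theorem exists_of_updateEnds (hab : InterlacingAB k a b) {i b0 bk : ℕ} (hi : i ∈ Icc 1 3)
    (hb0a0 : b0 ≠ a 0) (hb0a1 : b0 ≠ a 1) (hbka : bk ≠ a k) (hbka1 : bk ≠ a (k + 1))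
    {p q : ℕ} (hpq : p < q) (hq_le : q ≤ k) (hp : updateEnds b k b0 bk p = i)
    (hq : updateEnds b k b0 bk q = i) :
    ∃ r, 1 ≤ r ∧ r ≤ k - 2 ∧ p ≤ r ∧ r < q ∧ a (r + 1) = i := by
  set S := {p ∈ range (k + 2) | a p = i}
  set T := {p ∈ Icc 1 (k - 1) | b p = i}
  have hsep := hab.isSeparatedBy hi
  have hc : #S = #T + 1 := (hab i hi).1
  have mem_S {s : ℕ} : s ∈ S ↔ s < k + 2 ∧ a s = i := by simp [S]
  have mem_T {r : ℕ} (hr0 : r ≠ 0) (hrk : r ≠ k) (hrk' : r ≤ k)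
      (hr : updateEnds b k b0 bk r = i) : r ∈ T := by
    simp only [updateEnds, if_neg hr0, if_neg hrk] at hr
    simp only [T, mem_filter, mem_Icc, hr, and_true]
    omega
  obtain ⟨s, hs, hps, hsq⟩ : ∃ s ∈ S, (p = 0 ∨ p < s) ∧ (q = k ∨ s ≤ q) := by
    rcases eq_or_ne p 0 with hp0 | hp0 <;> rcases eq_or_ne q k with hqk | hqk
    · obtain ⟨s, hs⟩ := card_pos.1 (show 0 < #S by omega)
      exact ⟨s, hs, .inl hp0, .inl hqk⟩
    · obtain ⟨s, hs, hsq⟩ := hsep.exists_mem_le hc (mem_T (by omega) hqk hq_le hq)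
      exact ⟨s, hs, .inl hp0, .inr hsq⟩
    · obtain ⟨s, hs, hps⟩ := hsep.exists_lt_mem hc (mem_T hp0 (by omega) (by omega) hp)
      exact ⟨s, hs, .inr hps, .inl hqk⟩
    · obtain ⟨s, hs, hps, hsq⟩ :=
        hsep.exists_mem_Ioc hc (mem_T hp0 (by omega) (by omega) hp) (mem_T (by omega) hqk hq_le hq) hpq
      exact ⟨s, hs, .inr hps, .inr hsq⟩
  obtain ⟨hsk, has⟩ := mem_S.1 hs
  have h2s : 2 ≤ s := by
    by_contra! h
    have hb0 : b0 = i := by simpa [updateEnds, show p = 0 by omega] using hp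
    interval_cases s
    exacts [hb0a0 (hb0.trans has.symm), hb0a1 (hb0.trans has.symm)]
  have hs_le : s ≤ k - 1 := by
    by_contra! h
    have hbk : bk = i := by simpa [updateEnds, show q = k by omega, show k ≠ 0 by omega] using hq
    obtain rfl | rfl : s = k ∨ s = k + 1 := by omega
    exacts [hbka (hbk.trans has.symm), hbka1 (hbk.trans has.symm)]
  exact ⟨s - 1, by omega, by omega, by omega, by omega, by rwa [Nat.sub_add_cancel (by omega)]⟩

end InterlacingAB

theorem interlacing_step_general (k : ℕ) (hk : 2 ≤ k) (a b : ℕ → ℕ)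
    (ha : ∀ p, p ≤ k + 1 → a p ∈ Finset.Icc 1 3)
    (hab : InterlacingAB k a b) :
    a 0 ≠ a 1 ∧ a k ≠ a (k + 1) ∧
    ∀ b0 bk : ℕ,
      b0 ∈ Finset.Icc 1 3 → b0 ≠ a 0 → b0 ≠ a 1 →
      bk ∈ Finset.Icc 1 3 → bk ≠ a k → bk ≠ a (k + 1) →
      InterlacingAB (k - 1)
        (fun p => if p = 0 then b0 else if p = k then bk else b p)
        (fun p => a (p + 1)) := by
  obtain ⟨m, rfl⟩ : ∃ m, k = m + 2 := ⟨k - 2, by omega⟩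
  have h01 : a 0 ≠ a 1 := hab.apply_ne_apply_succ (ha 0 (by omega)) (Or.inl rfl)
  have hk1 : a (m + 2) ≠ a (m + 3) := hab.apply_ne_apply_succ (ha (m + 2) (by omega)) (Or.inr rfl)
  refine ⟨h01, hk1, fun b0 bk hb0 hb0a0 hb0a1 hbk hbka hbka1 i hi => ⟨?_, ?_⟩⟩
  · exact card_filter_updateEnds (hab i hi).1
      (ite_add_ite_add_ite_eq_one hb0 (ha 0 (by omega)) (ha 1 (by omega)) hi hb0a0 hb0a1 h01)
      (ite_add_ite_add_ite_eq_one hbk (ha (m + 2) (by omega)) (ha (m + 3) (by omega)) hi hbka hbka1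
        hk1)
  · intro p q hpq hq hp hq' _
    exact hab.exists_of_updateEnds hi hb0a0 hb0a1 hbka hbka1 hpq (by omega) hp hq'

/-- If `(a_0,…,a_(k+1))` and `(b_1,…,b_(k-1))` are interlacing with `k ≥ 2`, then
`a_0 ≠ a_1` and `a_k ≠ a_(k+1)`; moreover, letting `b_0` be the unique element of
`{1,2,3} ∖ {a_0, a_1}` and `b_k` the unique element of `{1,2,3} ∖ {a_k, a_(k+1)}`,
the tuples `b' = (b_0, b_1, …, b_k)` and `a' = (a_2, …, a_(k-1))` are interlacing
(with `k` replaced by `k - 1`). -/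
theorem interlacing_step (k : ℕ) (hk : 2 ≤ k) (a b : ℕ → ℕ)
    (ha : ∀ p, p ≤ k + 1 → a p ∈ Finset.Icc 1 3)
    (hb : ∀ p, 1 ≤ p → p ≤ k - 1 → b p ∈ Finset.Icc 1 3)
    (hab : InterlacingAB k a b) :
    a 0 ≠ a 1 ∧ a k ≠ a (k + 1) ∧
    ∀ b0 bk : ℕ,
      b0 ∈ Finset.Icc 1 3 → b0 ≠ a 0 → b0 ≠ a 1 →
      bk ∈ Finset.Icc 1 3 → bk ≠ a k → bk ≠ a (k + 1) →
      InterlacingAB (k - 1)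
        (fun p => if p = 0 then b0 else if p = k then bk else b p)
        (fun p => a (p + 1)) :=
  interlacing_step_general k hk a b ha hab
end

section
/- For every n ≥ 1, the map 𝒫 is a bijection from the set 𝒞_n of proper vertex 4-colorings of Δ_n with base point colored 0 to the set 𝒫_n of 1/2/3-puzzles on Δ_n. -/
/-- The set of `1/2/3`-puzzles on `Δ_n`, normalized to `0` off the edge set. -/
def PuzzleFull (n : ℕ) : Set (ℕ → ℕ → ℕ → ℕ) :=
  {P | IsPuzzle123 n P ∧ ∀ d x y, ¬(d < 3 ∧ x + y < n) → P d x y = 0}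

/-- The label that the map `𝒫` assigns to an edge whose endpoints have colors
`c`, `c'` ∈ {0,1,2,3}: the unique nonzero color if one endpoint has color `0`,
and otherwise the unique element of `{1,2,3} ∖ {c, c'}`. -/
def edgeLabelC (c c' : ℕ) : ℕ :=
  if c = 0 then c' else if c' = 0 then c else 6 - c - c'

/-- The map `𝒫` from vertex `4`-colorings of `Δ_n` to edge labelings. -/
def PofC (n : ℕ) (C : ℕ × ℕ → ℕ) : ℕ → ℕ → ℕ → ℕ :=
  fun d x y =>
    if d < 3 ∧ x + y < n then
      if d = 0 then edgeLabelC (C (x, y)) (C (x + 1, y))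
      else if d = 1 then edgeLabelC (C (x, y)) (C (x, y + 1))
      else edgeLabelC (C (x + 1, y)) (C (x, y + 1))
    else 0

/-- Proper vertex `4`-colorings of `Δ_n` (colors `{0,1,2,3}`) with the base point
`(0,0)` colored `0`, normalized to `0` outside the vertex set. -/
def ColorFull (n : ℕ) : Set (ℕ × ℕ → ℕ) :=
  {C | (∀ x y, x + y ≤ n → C (x, y) < 4) ∧
       (∀ x y, x + y < n →
          C (x, y) ≠ C (x + 1, y) ∧ C (x, y) ≠ C (x, y + 1) ∧
          C (x + 1, y) ≠ C (x, y + 1)) ∧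
       C (0, 0) = 0 ∧
       (∀ x y, ¬(x + y ≤ n) → C (x, y) = 0)}


/-!
Identify the colors `{0,1,2,3}` with the Klein four-group `(ℕ<4, ^^^)`. For a proper coloring,
`𝒫` labels each edge by the xor of the colors of its endpoints, a nonzero element. Three pairwise
distinct nonzero elements xor to `0`, so the puzzle condition on a face says exactly that the xor
of the labels around it vanishes: puzzles are the discrete xor-gradients of vertex functions. Since
`Δ_n` is simply connected, a gradient determines its primitive up to the value at the base point,
and conversely the xor of the labels along paths from the base point is a primitive of any puzzle.
-/

open Finset

section Xor

lemma xor_mem_Icc_one_three {a b : ℕ} (ha : a < 4) (hb : b < 4) (hab : a ≠ b) :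
    a ^^^ b ∈ Icc 1 3 := by
  have hlt : a ^^^ b < 4 := Nat.xor_lt_two_pow (n := 2) ha hb
  have hne : a ^^^ b ≠ 0 := mt xor_eq_zero_iff.mp hab
  rw [mem_Icc]
  omega

lemma xor_eq_of_pairwise_ne {a b c : ℕ} (ha : a ∈ Icc 1 3) (hb : b ∈ Icc 1 3)
    (hc : c ∈ Icc 1 3) (hab : a ≠ b) (hac : a ≠ c) (hbc : b ≠ c) : a ^^^ b = c := by
  obtain ⟨ha1, ha3⟩ := mem_Icc.mp ha
  obtain ⟨hb1, hb3⟩ := mem_Icc.mp hb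
  obtain ⟨hc1, hc3⟩ := mem_Icc.mp hc
  interval_cases a <;> interval_cases b <;> interval_cases c <;> simp_all

lemma xor_pairwise_ne {a b c : ℕ} (hab : a ≠ b) (hbc : b ≠ c) (hac : a ≠ c) :
    a ^^^ b ≠ a ^^^ c ∧ a ^^^ b ≠ b ^^^ c ∧ a ^^^ c ≠ b ^^^ c := by
  refine ⟨(xor_right_involutive a).injective.ne hbc, ?_,
    (xor_left_involutive c).injective.ne hab⟩
  rw [xor_comm b c]
  exact (xor_left_involutive b).injective.ne hac

lemma edgeLabelC_eq_xor {a b : ℕ} (ha : a < 4) (hb : b < 4) (hab : a ≠ b) :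
    edgeLabelC a b = a ^^^ b := by
  interval_cases a <;> interval_cases b <;> simp_all [edgeLabelC]

end Xor

def IsXorGradient (n : ℕ) (f : ℕ × ℕ → ℕ) (P : ℕ → ℕ → ℕ → ℕ) : Prop :=
  ∀ x y, x + y < n →
    P 0 x y = f (x, y) ^^^ f (x + 1, y) ∧ P 1 x y = f (x, y) ^^^ f (x, y + 1) ∧
      P 2 x y = f (x + 1, y) ^^^ f (x, y + 1)

/-- The xor of the labels along the path from `(0,0)` up the left side to `(0,y)`, then
horizontally to `(x,y)`. -/
def xorPrimitive (P : ℕ → ℕ → ℕ → ℕ) : ℕ → ℕ → ℕ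
  | 0, 0 => 0
  | 0, y + 1 => xorPrimitive P 0 y ^^^ P 1 0 y
  | x + 1, y => xorPrimitive P x y ^^^ P 0 x y

def colorOfPuzzle (n : ℕ) (P : ℕ → ℕ → ℕ → ℕ) : ℕ × ℕ → ℕ :=
  fun p => if p.1 + p.2 ≤ n then xorPrimitive P p.1 p.2 else 0

section Triangle

variable {n : ℕ}

section Colorings

variable {C : ℕ × ℕ → ℕ}

lemma isXorGradient_PofC (hC : C ∈ ColorFull n) : IsXorGradient n C (PofC n C) := by
  obtain ⟨hlt, hprop, -, -⟩ := hC
  intro x y h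
  have ha := hlt x y h.le
  have hb := hlt (x + 1) y (by omega)
  have hc := hlt x (y + 1) (by omega)
  obtain ⟨hab, hac, hbc⟩ := hprop x y h
  simp [PofC, h, edgeLabelC_eq_xor ha hb hab, edgeLabelC_eq_xor ha hc hac,
    edgeLabelC_eq_xor hb hc hbc]

lemma mapsTo_PofC : Set.MapsTo (PofC n) (ColorFull n) (PuzzleFull n) := by
  intro C hC
  have hgrad := isXorGradient_PofC hC
  obtain ⟨hlt, hprop, -, -⟩ := hC
  refine ⟨⟨?_, ?_, ?_⟩, fun d x y h => by simp [PofC, h]⟩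
  · intro d x y hd h
    obtain ⟨g0, g1, g2⟩ := hgrad x y h
    obtain ⟨hab, hac, hbc⟩ := hprop x y h
    have ha := hlt x y h.le
    have hb := hlt (x + 1) y (by omega)
    have hc := hlt x (y + 1) (by omega)
    interval_cases d
    · exact g0 ▸ xor_mem_Icc_one_three ha hb hab
    · exact g1 ▸ xor_mem_Icc_one_three ha hc hac
    · exact g2 ▸ xor_mem_Icc_one_three hb hc hbc
  · intro x y h
    obtain ⟨g0, g1, g2⟩ := hgrad x y h
    obtain ⟨hab, hac, hbc⟩ := hprop x y h
    obtain ⟨h01, h02, h12⟩ := xor_pairwise_ne hab hbc hac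
    rw [g0, g1, g2]
    exact ⟨h12, h01.symm, h02.symm⟩
  · intro x y h
    obtain ⟨-, -, g2⟩ := hgrad x y (by omega)
    obtain ⟨g0, -, -⟩ := hgrad x (y + 1) (by omega)
    obtain ⟨-, g1, -⟩ := hgrad (x + 1) y (by omega)
    have hab := (hprop x y (by omega)).2.2
    have hbc := (hprop x (y + 1) (by omega)).1
    have hac := (hprop (x + 1) y (by omega)).2.1
    rw [g0, g1, g2]
    obtain ⟨h01, h02, h12⟩ := xor_pairwise_ne hab hbc hac
    exact ⟨h02, h01, h12.symm⟩

lemma eq_xorPrimitive_of_isXorGradient {f : ℕ × ℕ → ℕ} {P : ℕ → ℕ → ℕ → ℕ}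
    (hf : IsXorGradient n f P) (h00 : f (0, 0) = 0) :
    ∀ x y, x + y ≤ n → f (x, y) = xorPrimitive P x y := by
  intro x
  induction x with
  | zero =>
    intro y
    induction y with
    | zero => exact fun _ => by rw [h00, xorPrimitive]
    | succ y ih =>
      intro h
      rw [xorPrimitive, ← ih (by omega), (hf 0 y (by omega)).2.1, xor_cancel_left]
  | succ x ih =>
    intro y h
    rw [xorPrimitive, ← ih y (by omega), (hf x y (by omega)).1, xor_cancel_left]

lemma leftInvOn_colorOfPuzzle : Set.LeftInvOn (colorOfPuzzle n) (PofC n) (ColorFull n) := by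
  intro C hC
  funext ⟨x, y⟩
  by_cases h : x + y ≤ n
  · rw [colorOfPuzzle, if_pos h]
    exact (eq_xorPrimitive_of_isXorGradient (isXorGradient_PofC hC) hC.2.2.1 x y h).symm
  · rw [colorOfPuzzle, if_neg h, hC.2.2.2 x y h]

end Colorings

section Puzzles

variable {P : ℕ → ℕ → ℕ → ℕ}

lemma xorPrimitive_lt_four (hP : ∀ d x y, d < 3 → x + y < n → P d x y ∈ Icc 1 3) :
    ∀ x y, x + y ≤ n → xorPrimitive P x y < 4 := by
  have hlabel : ∀ d x y, d < 3 → x + y < n → P d x y < 4 :=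
    fun d x y hd h => Nat.lt_succ_of_le (mem_Icc.mp (hP d x y hd h)).2
  intro x
  induction x with
  | zero =>
    intro y
    induction y with
    | zero => exact fun _ => by rw [xorPrimitive]; norm_num
    | succ y ih =>
      intro h
      rw [xorPrimitive]
      exact Nat.xor_lt_two_pow (n := 2) (ih (by omega)) (hlabel 1 0 y (by omega) (by omega))
  | succ x ih =>
    intro y h
    rw [xorPrimitive]
    exact Nat.xor_lt_two_pow (n := 2) (ih y (by omega)) (hlabel 0 x y (by omega) (by omega))

lemma IsPuzzle123.xor_up_face (hP : IsPuzzle123 n P) {x y : ℕ} (h : x + y < n) :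
    P 0 x y ^^^ P 1 x y = P 2 x y := by
  obtain ⟨hIcc, hup, -⟩ := hP
  obtain ⟨h12, h10, h20⟩ := hup x y h
  exact xor_eq_of_pairwise_ne (hIcc 0 x y (by omega) h) (hIcc 1 x y (by omega) h)
    (hIcc 2 x y (by omega) h) h10.symm h20.symm h12

lemma IsPuzzle123.xor_down_face (hP : IsPuzzle123 n P) {x y : ℕ} (h : x + y + 1 < n) :
    P 2 x y ^^^ P 0 x (y + 1) = P 1 (x + 1) y := by
  obtain ⟨hIcc, -, hdown⟩ := hP
  obtain ⟨h20, h21, h01⟩ := hdown x y h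
  exact xor_eq_of_pairwise_ne (hIcc 2 x y (by omega) (by omega))
    (hIcc 0 x (y + 1) (by omega) (by omega)) (hIcc 1 (x + 1) y (by omega) (by omega)) h20 h21 h01

/-- The gradient condition in the vertical direction: by the two face relations, both paths
around the rhombus formed by the up and down faces at `(x, y)` carry the same xor. -/
lemma xorPrimitive_succ_right (hP : IsPuzzle123 n P) :
    ∀ x y, x + y < n → xorPrimitive P x (y + 1) = xorPrimitive P x y ^^^ P 1 x y := by
  intro x
  induction x with
  | zero => exact fun _ _ => by rw [xorPrimitive]
  | succ x ih =>
    intro y h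
    rw [xorPrimitive, xorPrimitive, ih y (by omega), ← hP.xor_down_face (by omega),
      ← hP.xor_up_face (by omega)]
    simp only [xor_assoc, xor_cancel_left]

lemma isXorGradient_colorOfPuzzle (hP : IsPuzzle123 n P) :
    IsXorGradient n (colorOfPuzzle n P) P := by
  intro x y h
  simp only [colorOfPuzzle, if_pos h.le, if_pos (show x + 1 + y ≤ n by omega),
    if_pos (show x + (y + 1) ≤ n by omega)]
  have h0 : xorPrimitive P (x + 1) y = xorPrimitive P x y ^^^ P 0 x y := by
    rw [xorPrimitive]
  have h1 := xorPrimitive_succ_right hP x y h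
  refine ⟨?_, ?_, ?_⟩
  · rw [h0, xor_cancel_left]
  · rw [h1, xor_cancel_left]
  · rw [h0, h1, ← hP.xor_up_face h, xor_assoc, Nat.xor_left_comm (P 0 x y), xor_cancel_left]

lemma mapsTo_colorOfPuzzle : Set.MapsTo (colorOfPuzzle n) (PuzzleFull n) (ColorFull n) := by
  intro P hP
  have hgrad := isXorGradient_colorOfPuzzle hP.1
  have hne : ∀ d x y, d < 3 → x + y < n → P d x y ≠ 0 :=
    fun d x y hd h => Nat.one_le_iff_ne_zero.mp (mem_Icc.mp (hP.1.1 d x y hd h)).1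
  refine ⟨fun x y h => ?_, fun x y h => ?_, by simp [colorOfPuzzle, xorPrimitive],
    fun x y h => if_neg h⟩
  · rw [colorOfPuzzle, if_pos h]
    exact xorPrimitive_lt_four hP.1.1 x y h
  · obtain ⟨g0, g1, g2⟩ := hgrad x y h
    refine ⟨?_, ?_, ?_⟩ <;> refine mt xor_eq_zero_iff.mpr ?_
    · exact g0 ▸ hne 0 x y (by omega) h
    · exact g1 ▸ hne 1 x y (by omega) h
    · exact g2 ▸ hne 2 x y (by omega) h

lemma rightInvOn_colorOfPuzzle : Set.RightInvOn (colorOfPuzzle n) (PofC n) (PuzzleFull n) := by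
  intro P hP
  funext d x y
  by_cases h : d < 3 ∧ x + y < n
  · obtain ⟨hd, hxy⟩ := h
    obtain ⟨g0, g1, g2⟩ := isXorGradient_PofC (mapsTo_colorOfPuzzle hP) x y hxy
    obtain ⟨p0, p1, p2⟩ := isXorGradient_colorOfPuzzle hP.1 x y hxy
    interval_cases d
    · rw [g0, p0]
    · rw [g1, p1]
    · rw [g2, p2]
  · rw [hP.2 d x y h]
    simp [PofC, h]

end Puzzles

end Triangle

theorem PofC_bijection_general (n : ℕ) :
    Set.BijOn (PofC n) (ColorFull n) (PuzzleFull n) :=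
  Set.InvOn.bijOn ⟨leftInvOn_colorOfPuzzle, rightInvOn_colorOfPuzzle⟩ mapsTo_PofC
    mapsTo_colorOfPuzzle

/-- For every `n ≥ 1`, the map `𝒫` is a bijection from proper vertex `4`-colorings
of `Δ_n` with base point colored `0` to `1/2/3`-puzzles on `Δ_n`. -/
theorem PofC_bijection (n : ℕ) (hn : 1 ≤ n) :
    Set.BijOn (PofC n) (ColorFull n) (PuzzleFull n) :=
  PofC_bijection_general n
end

section
/- For every n ≥ 1 and every edge labeling D ∈ 𝒟_n of the square grid graph □_n, the array 𝒟'(D) is an interlacing triangular array of rank 4 and height n. -/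
/-- Edges of the square grid `□_n`: `(0, x, y)` is the horizontal edge
`{(x,y),(x+1,y)}` (for `x < n`, `y ≤ n`) and `(1, x, y)` is the vertical edge
`{(x,y),(x,y+1)}` (for `x ≤ n`, `y < n`).  `D ∈ 𝒟_n` iff every edge of `□_n`
is labeled in `{1,2,3,4}`; every main-diagonal face has four pairwise distinct
edge labels; and every off-diagonal face (south `D 0 x y`, north `D 0 x (y+1)`,
west `D 1 x y`, east `D 1 (x+1) y`) uses exactly two distinct labels, either with
west = south and north = east, or with north = south and west = east. -/
def IsSquareLab (n : ℕ) (D : ℕ → ℕ → ℕ → ℕ) : Prop :=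
  (∀ x y, x < n → y ≤ n → D 0 x y ∈ Finset.Icc 1 4) ∧
  (∀ x y, x ≤ n → y < n → D 1 x y ∈ Finset.Icc 1 4) ∧
  (∀ x, x < n →
      (D 0 x x ≠ D 0 x (x + 1) ∧ D 0 x x ≠ D 1 x x ∧ D 0 x x ≠ D 1 (x + 1) x ∧
       D 0 x (x + 1) ≠ D 1 x x ∧ D 0 x (x + 1) ≠ D 1 (x + 1) x ∧
       D 1 x x ≠ D 1 (x + 1) x)) ∧
  (∀ x y, x < n → y < n → x ≠ y →
      ((D 1 x y = D 0 x y ∧ D 0 x (y + 1) = D 1 (x + 1) y ∧ D 1 x y ≠ D 0 x (y + 1)) ∨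
       (D 0 x (y + 1) = D 0 x y ∧ D 1 x y = D 1 (x + 1) y ∧ D 0 x y ≠ D 1 x y)))

/-- The map `𝒟'`: the `k`-th row of `𝒟'(D)` reads the boundary of the copy of
`□_k` inside `□_n` clockwise from the base point `(0,0)`: the left side bottom to
top (`T^(1)`), the top side left to right (`T^(2)`), the right side top to bottom
(`T^(3)`), and the bottom side right to left (`T^(4)`). -/
def TofD (n : ℕ) (D : ℕ → ℕ → ℕ → ℕ) : ℕ → ℕ → ℕ → ℕ :=
  fun i j k =>
    if 1 ≤ j ∧ j ≤ k ∧ k ≤ n then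
      if i = 1 then D 1 0 (j - 1)
      else if i = 2 then D 0 (j - 1) k
      else if i = 3 then D 1 k (k - j)
      else if i = 4 then D 0 (k - j) 0
      else 0
    else 0


open Finset

def ind (a x : ℕ) : ℤ := if x = a then 1 else 0

lemma ind_nonneg (a x : ℕ) : 0 ≤ ind a x := by
  unfold ind; split_ifs <;> norm_num

lemma ind_le_one (a x : ℕ) : ind a x ≤ 1 := by
  unfold ind; split_ifs <;> norm_num

lemma ind_add_ind_le_one {a x y : ℕ} (h : x ≠ y) : ind a x + ind a y ≤ 1 := by
  unfold ind; split_ifs <;> simp_all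

lemma ind_zero {a : ℕ} (ha : a ≠ 0) : ind a 0 = 0 := if_neg (Ne.symm ha)

theorem exists_mem_Ico_of_count_interlace {p q : ℕ → Prop} [DecidablePred p] [DecidablePred q]
    {a b : ℕ} (hpa : p a) (hab : a < b)
    (ha : Nat.count q a ≤ Nat.count p a) (hb : Nat.count p b ≤ Nat.count q b) :
    ∃ c ∈ Set.Ico a b, q c := by
  apply Nat.exists_of_count_lt_count
  have := Nat.count_monotone p hab
  rw [Nat.count_succ, if_pos hpa] at this
  omega

lemma Nat.mul_add_div_and_mod {n i t : ℕ} (hn : 0 < n) (ht : t < n) :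
    (i * n + t) / n = i ∧ (i * n + t) % n = t := by
  rw [add_comm, Nat.add_mul_div_right _ _ hn, Nat.div_eq_of_lt ht, zero_add,
    Nat.add_mul_mod_self_right, Nat.mod_eq_of_lt ht]
  exact ⟨rfl, rfl⟩

lemma Hc_eq {n i j k : ℕ} (hj : 1 ≤ j) :
    Hc n i j k = 2 * ((i * n + (j - 1) : ℕ) : ℤ) + 2 - n - k := by
  unfold Hc
  push_cast [Nat.cast_sub hj]
  ring

section Boundary

variable {n : ℕ} {D : ℕ → ℕ → ℕ → ℕ} {i j k s : ℕ}

lemma TofD_ne_zero (h : TofD n D i j k ≠ 0) : 1 ≤ i ∧ i ≤ 4 ∧ 1 ≤ j ∧ j ≤ k ∧ k ≤ n := by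
  unfold TofD at h
  split_ifs at h <;> omega

lemma TofD_zero_left : TofD n D 0 j k = 0 := by
  simp [TofD]

lemma TofD_eq_zero_of_lt (h : k < j) : TofD n D i j k = 0 := by
  simp [TofD, Nat.not_le.mpr h]

lemma TofD_left (hs : s < k) (hk : k ≤ n) : TofD n D 1 (s + 1) k = D 1 0 s := by
  simp [TofD, hs, hk]

lemma TofD_top (hs : s < k) (hk : k ≤ n) : TofD n D 2 (s + 1) k = D 0 s k := by
  simp [TofD, hs, hk]

lemma TofD_right (hs : s < k) (hk : k ≤ n) : TofD n D 3 (s + 1) k = D 1 k (k - (s + 1)) := by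
  simp [TofD, hs, hk]

lemma TofD_bottom (hs : s < k) (hk : k ≤ n) : TofD n D 4 (s + 1) k = D 0 (k - (s + 1)) 0 := by
  simp [TofD, hs, hk]

end Boundary

namespace IsSquareLab

variable {n : ℕ} {D : ℕ → ℕ → ℕ → ℕ} {a x y : ℕ}

theorem west_ne_north_and_south_ne_east (hD : IsSquareLab n D) (hx : x < n) (hy : y < n) :
    D 1 x y ≠ D 0 x (y + 1) ∧ D 0 x y ≠ D 1 (x + 1) y := by
  obtain ⟨-, -, hdiag, hoff⟩ := hD
  rcases eq_or_ne x y with rfl | hxy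
  · obtain ⟨-, -, h, h', -, -⟩ := hdiag x hx
    exact ⟨h'.symm, h⟩
  · rcases hoff x y hx hy hxy with h | h <;> omega

theorem ind_west_add_ind_north (hD : IsSquareLab n D) (hx : x < n) (hy : y < n) (hxy : x ≠ y) :
    ind a (D 1 x y) + ind a (D 0 x (y + 1)) = ind a (D 0 x y) + ind a (D 1 (x + 1) y) := by
  rcases hD.2.2.2 x y hx hy hxy with ⟨hws, hne, -⟩ | ⟨hns, hwe, -⟩
  · rw [hws, hne]
  · rw [hns, hwe, add_comm]

theorem ind_diag_sum (hD : IsSquareLab n D) (hx : x < n) (ha : a ∈ Icc 1 4) :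
    ind a (D 1 x x) + ind a (D 0 x (x + 1)) + ind a (D 0 x x) + ind a (D 1 (x + 1) x) = 1 := by
  obtain ⟨hh, hv, hdiag, -⟩ := hD
  have h1 := hh x x hx hx.le
  have h2 := hh x (x + 1) hx hx
  have h3 := hv x x hx.le hx
  have h4 := hv (x + 1) x hx hx
  have := hdiag x hx
  simp only [mem_Icc] at *
  unfold ind
  split_ifs <;> omega

theorem TofD_mem_Icc (hD : IsSquareLab n D) {i j k : ℕ} (hi1 : 1 ≤ i) (hi4 : i ≤ 4)
    (hj1 : 1 ≤ j) (hjk : j ≤ k) (hkn : k ≤ n) : TofD n D i j k ∈ Icc 1 4 := by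
  obtain ⟨s, rfl⟩ : ∃ s, j = s + 1 := ⟨j - 1, by omega⟩
  interval_cases i
  · rw [TofD_left (by omega) hkn]; exact hD.2.1 0 s (by omega) (by omega)
  · rw [TofD_top (by omega) hkn]; exact hD.1 s k (by omega) hkn
  · rw [TofD_right (by omega) hkn]; exact hD.2.1 k _ hkn (by omega)
  · rw [TofD_bottom (by omega) hkn]; exact hD.1 _ 0 (by omega) (by omega)

end IsSquareLab

section Layout

variable (n : ℕ) (D : ℕ → ℕ → ℕ → ℕ)

/-- Row `k` of `TofD n D` with entry `(i, j)` at position `i * n + (j - 1)`; block `0` and the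
positions past `k` in each block hold `0`. -/
def rowSeq (k m : ℕ) : ℕ := TofD n D (m / n) (m % n + 1) k

def rowCountDiff (k a m : ℕ) : ℤ :=
  Nat.count (fun x => rowSeq n D (k + 1) x = a) m - Nat.count (fun x => rowSeq n D k x = a) m

variable {n D} {a i k m t : ℕ}

lemma rowSeq_mul_add (hn : 0 < n) (ht : t < n) :
    rowSeq n D k (i * n + t) = TofD n D i (t + 1) k := by
  obtain ⟨hdiv, hmod⟩ := Nat.mul_add_div_and_mod (i := i) hn ht
  rw [rowSeq, hdiv, hmod]

lemma rowCountDiff_succ :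
    rowCountDiff n D k a (m + 1) =
      rowCountDiff n D k a m + (ind a (rowSeq n D (k + 1) m) - ind a (rowSeq n D k m)) := by
  simp only [rowCountDiff, Nat.count_succ, ind]
  push_cast
  ring

lemma rowCountDiff_mul_add (hn : 0 < n) (ht : t ≤ n) :
    rowCountDiff n D k a (i * n + t) = rowCountDiff n D k a (i * n) +
      ∑ s ∈ range t, (ind a (TofD n D i (s + 1) (k + 1)) - ind a (TofD n D i (s + 1) k)) := by
  induction t with
  | zero => simp
  | succ t ih =>
    rw [← add_assoc, rowCountDiff_succ, ih (by omega), sum_range_succ,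
      rowSeq_mul_add hn (by omega), rowSeq_mul_add hn (by omega), add_assoc]

end Layout

/-- The value of `rowCountDiff n D k a` just before entry `t + 1` of side `i` of row `k + 1`
(`i = 5` marks the end of the row). Along the top it is read off the vertical edge `(t, k)` that the
cut crosses, along the right side off the south and east edges of face `(k, k - t)`. -/
def cutValue (D : ℕ → ℕ → ℕ → ℕ) (k a : ℕ) : ℕ → ℕ → ℤ
  | 2, t => ind a (D 1 t k)
  | 3, t => 1 - ind a (D 0 k (k - t)) - ind a (D 1 (k + 1) (k - t))
  | 4, t => 1 - ind a (D 0 (k - t) 0)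
  | 5, _ => 1
  | _, _ => 0

section CutValue

variable {n : ℕ} {D : ℕ → ℕ → ℕ → ℕ} {a i k t : ℕ}

lemma cutValue_succ_sub (hD : IsSquareLab n D) (hk : k < n) (hi1 : 1 ≤ i) (hi4 : i ≤ 4)
    (ht : t < k) :
    cutValue D k a i (t + 1) - cutValue D k a i t =
      ind a (TofD n D i (t + 1) (k + 1)) - ind a (TofD n D i (t + 1) k) := by
  interval_cases i
  · simp [cutValue, TofD_left (by omega : t < k + 1) hk, TofD_left ht hk.le]
  · rw [TofD_top (by omega : t < k + 1) hk, TofD_top ht hk.le]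
    have := hD.ind_west_add_ind_north (a := a) (x := t) (y := k) (by omega) hk (by omega)
    simp only [cutValue]
    linarith
  · rw [TofD_right (by omega : t < k + 1) hk, TofD_right ht hk.le]
    have := hD.ind_west_add_ind_north (a := a) (x := k) (y := k - (t + 1)) hk (by omega) (by omega)
    rw [show k - (t + 1) + 1 = k - t by omega] at this
    simp only [cutValue, Nat.add_sub_add_right]
    linarith
  · rw [TofD_bottom (by omega : t < k + 1) hk, TofD_bottom ht hk.le]
    simp only [cutValue, Nat.add_sub_add_right]
    ring

lemma cutValue_succ_zero (hD : IsSquareLab n D) (hk : k < n) (ha : a ∈ Icc 1 4)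
    (hi1 : 1 ≤ i) (hi4 : i ≤ 4) :
    cutValue D k a (i + 1) 0 = cutValue D k a i k + ind a (TofD n D i (k + 1) (k + 1)) := by
  interval_cases i
  · simp [cutValue, TofD_left (by omega : k < k + 1) hk]
  · have := hD.ind_diag_sum hk ha
    rw [TofD_top (by omega : k < k + 1) hk]
    simp only [cutValue, Nat.sub_zero]
    linarith
  · simp [cutValue, TofD_right (by omega : k < k + 1) hk]
  · simp [cutValue, TofD_bottom (by omega : k < k + 1) hk]

lemma cutValue_bounds (hD : IsSquareLab n D) (hk : k < n) (hi1 : 1 ≤ i) (hi4 : i ≤ 4)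
    (ht : t ≤ k) :
    0 ≤ cutValue D k a i t ∧ cutValue D k a i t + ind a (TofD n D i (t + 1) (k + 1)) ≤ 1 := by
  have hne := fun x y hx hy => hD.west_ne_north_and_south_ne_east (x := x) (y := y) hx hy
  interval_cases i
  · simp [cutValue, ind_le_one]
  · rw [TofD_top (by omega : t < k + 1) hk]
    exact ⟨ind_nonneg _ _, ind_add_ind_le_one (hne t k (by omega) hk).1⟩
  · rw [TofD_right (by omega : t < k + 1) hk, Nat.add_sub_add_right]
    have := ind_add_ind_le_one (a := a) (hne k (k - t) hk (by omega)).2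
    have := ind_nonneg a (D 0 k (k - t))
    simp only [cutValue]
    constructor <;> linarith
  · rw [TofD_bottom (by omega : t < k + 1) hk, Nat.add_sub_add_right]
    have := ind_le_one a (D 0 (k - t) 0)
    simp only [cutValue]
    constructor <;> linarith

end CutValue

section RowCountDiff

variable {n : ℕ} {D : ℕ → ℕ → ℕ → ℕ} {a i k t : ℕ}

lemma rowCountDiff_side (hD : IsSquareLab n D) (hn : 0 < n) (hk : k < n) (ha : a ∈ Icc 1 4)
    (hi1 : 1 ≤ i) (hi4 : i ≤ 4) :
    (∀ t ≤ k, rowCountDiff n D k a (i * n + t) =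
      rowCountDiff n D k a (i * n) + (cutValue D k a i t - cutValue D k a i 0)) ∧
    rowCountDiff n D k a ((i + 1) * n) =
      rowCountDiff n D k a (i * n) + (cutValue D k a (i + 1) 0 - cutValue D k a i 0) := by
  have ha0 : a ≠ 0 := by simp only [mem_Icc] at ha; omega
  have hside : ∀ t ≤ k, ∑ s ∈ range t,
      (ind a (TofD n D i (s + 1) (k + 1)) - ind a (TofD n D i (s + 1) k)) =
        cutValue D k a i t - cutValue D k a i 0 := fun t ht => by
    rw [← sum_range_sub]
    exact sum_congr rfl fun s hs =>
      (cutValue_succ_sub hD hk hi1 hi4 (by simp only [mem_range] at hs; omega)).symm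
  refine ⟨fun t ht => by rw [rowCountDiff_mul_add hn (by omega), hside t ht], ?_⟩
  have hgap : ∑ s ∈ range n,
      (ind a (TofD n D i (s + 1) (k + 1)) - ind a (TofD n D i (s + 1) k)) =
      ∑ s ∈ range (k + 1),
      (ind a (TofD n D i (s + 1) (k + 1)) - ind a (TofD n D i (s + 1) k)) := by
    refine (sum_subset (range_subset_range.mpr hk) fun s _ hs => ?_).symm
    simp only [mem_range, not_lt] at hs
    rw [TofD_eq_zero_of_lt (by omega), TofD_eq_zero_of_lt (by omega), sub_self]
  rw [add_mul, one_mul, rowCountDiff_mul_add hn le_rfl, hgap, sum_range_succ, hside k le_rfl,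
    TofD_eq_zero_of_lt (Nat.lt_succ_self k), ind_zero ha0, cutValue_succ_zero hD hk ha hi1 hi4]
  ring

lemma rowCountDiff_mul (hD : IsSquareLab n D) (hn : 0 < n) (hk : k < n) (ha : a ∈ Icc 1 4)
    (hi1 : 1 ≤ i) (hi5 : i ≤ 5) : rowCountDiff n D k a (i * n) = cutValue D k a i 0 := by
  induction i, hi1 using Nat.le_induction with
  | base =>
    rw [show 1 * n = 0 * n + n by ring, rowCountDiff_mul_add hn le_rfl]
    simp [rowCountDiff, TofD_zero_left, cutValue]
  | succ i hi1 ih =>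
    rw [(rowCountDiff_side hD hn hk ha hi1 (by omega)).2, ih (by omega)]
    ring

lemma rowCountDiff_eq_cutValue (hD : IsSquareLab n D) (hn : 0 < n) (hk : k < n)
    (ha : a ∈ Icc 1 4) (hi1 : 1 ≤ i) (hi4 : i ≤ 4) (ht : t ≤ k) :
    rowCountDiff n D k a (i * n + t) = cutValue D k a i t := by
  rw [(rowCountDiff_side hD hn hk ha hi1 hi4).1 t ht, rowCountDiff_mul hD hn hk ha hi1 (by omega)]
  ring

end RowCountDiff

section Rows

variable {n : ℕ} {D : ℕ → ℕ → ℕ → ℕ} {a k : ℕ}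

lemma count_rowSeq_five_mul (hD : IsSquareLab n D) (hn : 0 < n) (hk : k ≤ n)
    (ha : a ∈ Icc 1 4) : Nat.count (fun m => rowSeq n D k m = a) (5 * n) = k := by
  have ha0 : a ≠ 0 := by simp only [mem_Icc] at ha; omega
  induction k with
  | zero =>
    refine Nat.count_iff_forall_not.mpr fun m _ hm => ?_
    have := TofD_ne_zero (hm ▸ ha0 : rowSeq n D 0 m ≠ 0)
    omega
  | succ k ih =>
    have h := rowCountDiff_mul hD hn (k := k) (by omega) ha (i := 5) (by omega) le_rfl
    simp only [rowCountDiff, cutValue] at h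
    have := ih (by omega)
    omega

lemma card_filter_TofD_eq_count (hn : 0 < n) (ha : a ≠ 0) :
    #{p ∈ Icc 1 4 ×ˢ Icc 1 k | TofD n D p.1 p.2 k = a} =
      Nat.count (fun m => rowSeq n D k m = a) (5 * n) := by
  rw [Nat.count_eq_card_filter_range]
  refine card_bij' (fun p _ => p.1 * n + (p.2 - 1)) (fun m _ => (m / n, m % n + 1))
    ?_ ?_ ?_ ?_
  · rintro ⟨i, j⟩ hp
    simp only [mem_filter, mem_product, mem_Icc] at hp
    obtain ⟨-, -, -, -, hkn⟩ := TofD_ne_zero (hp.2 ▸ ha)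
    have : i * n ≤ 4 * n := Nat.mul_le_mul_right _ hp.1.1.2
    simp only [mem_filter, mem_range]
    rw [rowSeq_mul_add hn (by omega), Nat.sub_add_cancel hp.1.2.1]
    exact ⟨by omega, hp.2⟩
  · intro m hm
    simp only [mem_filter, mem_range] at hm
    obtain ⟨hi1, hi4, hj1, hjk, -⟩ := TofD_ne_zero (hm.2 ▸ ha)
    simp only [mem_filter, mem_product, mem_Icc]
    exact ⟨⟨⟨hi1, hi4⟩, hj1, hjk⟩, hm.2⟩
  · rintro ⟨i, j⟩ hp
    simp only [mem_filter, mem_product, mem_Icc] at hp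
    obtain ⟨-, -, -, -, hkn⟩ := TofD_ne_zero (hp.2 ▸ ha)
    obtain ⟨hdiv, hmod⟩ := Nat.mul_add_div_and_mod hn (i := i) (t := j - 1) (by omega)
    simp only [hdiv, hmod, Prod.mk.injEq, true_and]
    omega
  · intro m _
    exact Nat.div_add_mod' m n

lemma exists_rowSeq_between (hD : IsSquareLab n D) (hn : 0 < n) (hk : k < n)
    {i j i' j' : ℕ} (hi1 : 1 ≤ i) (hi4 : i ≤ 4) (hj1 : 1 ≤ j) (hjk : j ≤ k + 1)
    (hi'1 : 1 ≤ i') (hi'4 : i' ≤ 4) (hj'1 : 1 ≤ j') (hj'k : j' ≤ k + 1)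
    (hT : TofD n D i j (k + 1) = TofD n D i' j' (k + 1)) (hlt : i * n + j < i' * n + j') :
    ∃ q ∈ Set.Ico (i * n + (j - 1)) (i' * n + (j' - 1)),
      rowSeq n D k q = TofD n D i j (k + 1) := by
  set a := TofD n D i j (k + 1)
  have ha : a ∈ Icc 1 4 := hD.TofD_mem_Icc hi1 hi4 hj1 hjk hk
  have hlow := (cutValue_bounds hD hk (a := a) hi1 hi4 (t := j - 1) (by omega)).1
  have hhigh := (cutValue_bounds hD hk (a := a) hi'1 hi'4 (t := j' - 1) (by omega)).2
  rw [← rowCountDiff_eq_cutValue hD hn hk ha hi1 hi4 (by omega)] at hlow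
  rw [← rowCountDiff_eq_cutValue hD hn hk ha hi'1 hi'4 (by omega), Nat.sub_add_cancel hj'1, ← hT,
    ind, if_pos rfl] at hhigh
  simp only [rowCountDiff] at hlow hhigh
  have hpa : rowSeq n D (k + 1) (i * n + (j - 1)) = a := by
    rw [rowSeq_mul_add hn (by omega), Nat.sub_add_cancel hj1]
  exact exists_mem_Ico_of_count_interlace (p := fun x => rowSeq n D (k + 1) x = a) hpa
    (by omega) (by omega) (by omega)

theorem TofD_interlaces (hD : IsSquareLab n D) (hn : 0 < n) :
    ∀ k, 1 ≤ k → k ≤ n → ∀ i j i' j',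
      1 ≤ i → i ≤ 4 → 1 ≤ j → j ≤ k → 1 ≤ i' → i' ≤ 4 → 1 ≤ j' → j' ≤ k →
      TofD n D i j k = TofD n D i' j' k → Hc n i j k < Hc n i' j' k →
      ∃ i'' j'', 1 ≤ i'' ∧ i'' ≤ 4 ∧ 1 ≤ j'' ∧ j'' ≤ k - 1 ∧
        TofD n D i'' j'' (k - 1) = TofD n D i j k ∧
        Hc n i j k < Hc n i'' j'' (k - 1) ∧ Hc n i'' j'' (k - 1) < Hc n i' j' k := by
  intro k hk1 hkn i j i' j' hi1 hi4 hj1 hjk hi'1 hi'4 hj'1 hj'k hT hHc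
  obtain ⟨k, rfl⟩ : ∃ k', k = k' + 1 := ⟨k - 1, by omega⟩
  rw [Hc_eq hj1, Hc_eq hj'1] at hHc
  obtain ⟨q, ⟨hq1, hq2⟩, hq⟩ := exists_rowSeq_between hD hn (by omega) hi1 hi4 hj1 hjk
    hi'1 hi'4 hj'1 hj'k hT (by omega)
  have hq0 : rowSeq n D k q ≠ 0 := by
    have := hD.TofD_mem_Icc hi1 hi4 hj1 hjk hkn
    simp only [mem_Icc] at this
    omega
  obtain ⟨hi''1, hi''4, hj''1, hj''k, -⟩ := TofD_ne_zero hq0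
  have hHc'' : Hc n (q / n) (q % n + 1) k = 2 * (q : ℤ) + 2 - n - k := by
    rw [Hc_eq hj''1, Nat.add_sub_cancel, Nat.div_add_mod']
  refine ⟨q / n, q % n + 1, hi''1, hi''4, hj''1, by simpa using hj''k,
    by simpa [rowSeq] using hq, ?_, ?_⟩ <;>
    simp only [Nat.add_sub_cancel, hHc'', Hc_eq hj1, Hc_eq hj'1] <;> omega

end Rows

/-- For every `n ≥ 1` and every admissible edge labeling `D ∈ 𝒟_n` of the square grid
`□_n`, the array `𝒟'(D)` is an interlacing triangular array of rank `4` and height `n`. -/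
theorem TofD_isITA (n : ℕ) (hn : 1 ≤ n) (D : ℕ → ℕ → ℕ → ℕ)
    (hD : IsSquareLab n D) : IsITA 4 n (TofD n D) := by
  refine ⟨fun i j k hi1 hi4 hj1 hjk hkn => hD.TofD_mem_Icc hi1 hi4 hj1 hjk hkn, ?_,
    TofD_interlaces hD hn⟩
  intro k _ hkn a ha
  have ha0 : a ≠ 0 := by simp only [mem_Icc] at ha; omega
  rw [card_filter_TofD_eq_count hn ha0, count_rowSeq_five_mul hD hn hkn ha]
end

section
/- Let n ≥ 1, let λ^{(1)} ∈ {2,3}^n, λ^{(2)} ∈ {1,2,3}^n, λ^{(3)} ∈ {1,3}^n, let P be a 1/2/3-puzzle on Δ_n with boundary conditions (λ^{(1)},λ^{(2)},λ^{(3)}), and let T = 𝒯(P). Then the following are equivalent: (b) no downward face of P has its left edge labeled 3, its right edge labeled 1, and its top edge labeled 2; (c) the triangle T^{(2)} contains no entry equal to 1 whose lower-right neighbor is 3, and no entry equal to 3 whose lower-left neighbor is 2 and whose lower-right neighbor is 3; (d) the triangle T^{(2)} contains no entry equal to 2 whose lower-left neighbor is 3, and no entry equal to 3 whose lower-left neighbor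 is 3 and whose lower-right neighbor is 1. -/
section

variable {n : ℕ} {P : ℕ → ℕ → ℕ → ℕ}

abbrev IsRainbow (a b c : ℕ) : Prop :=
  1 ≤ a ∧ a ≤ 3 ∧ 1 ≤ b ∧ b ≤ 3 ∧ 1 ≤ c ∧ c ≤ 3 ∧ a ≠ b ∧ a ≠ c ∧ b ≠ c

theorem IsPuzzle123.isRainbow_upFace (hP : IsPuzzle123 n P) {x y : ℕ} (h : x + y < n) :
    IsRainbow (P 1 x y) (P 2 x y) (P 0 x y) := by
  have h1 := Finset.mem_Icc.mp (hP.1 1 x y (by norm_num) h)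
  have h2 := Finset.mem_Icc.mp (hP.1 2 x y (by norm_num) h)
  have h0 := Finset.mem_Icc.mp (hP.1 0 x y (by norm_num) h)
  have := hP.2.1 x y h
  omega

theorem IsPuzzle123.isRainbow_downFace (hP : IsPuzzle123 n P) {x y : ℕ} (h : x + y + 1 < n) :
    IsRainbow (P 2 x y) (P 0 x (y + 1)) (P 1 (x + 1) y) := by
  have h2 := Finset.mem_Icc.mp (hP.1 2 x y (by norm_num) (by omega))
  have h0 := Finset.mem_Icc.mp (hP.1 0 x (y + 1) (by norm_num) (by omega))
  have h1 := Finset.mem_Icc.mp (hP.1 1 (x + 1) y (by norm_num) (by omega))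
  have := hP.2.2 x y h
  omega

def IsDownKPieceAt (n : ℕ) (P : ℕ → ℕ → ℕ → ℕ) (x y : ℕ) : Prop :=
  x + y + 1 < n ∧ P 2 x y = 3 ∧ P 1 (x + 1) y = 1 ∧ P 0 x (y + 1) = 2

def HasDownKPiece (n : ℕ) (P : ℕ → ℕ → ℕ → ℕ) : Prop :=
  ∃ x y, IsDownKPieceAt n P x y

/- Patterns of `T^(2)` in the coordinates of the diagonal edges: the entry `T^(2)_{j,k}`
is `D a b` with `D = P 2`, `a = j - 1`, `b = k - j`; its lower-left neighbour is then
`D (a - 1) b` and its lower-right neighbour `D a (b - 1)`. -/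

def HasEntryWithLowerRight (n : ℕ) (D : ℕ → ℕ → ℕ) (u r : ℕ) : Prop :=
  ∃ a b, a + b + 2 ≤ n ∧ D a (b + 1) = u ∧ D a b = r

def HasEntryWithLowerLeft (n : ℕ) (D : ℕ → ℕ → ℕ) (u l : ℕ) : Prop :=
  ∃ a b, a + b + 2 ≤ n ∧ D (a + 1) b = u ∧ D a b = l

def HasEntryWithLowerNeighbors (n : ℕ) (D : ℕ → ℕ → ℕ) (u l r : ℕ) : Prop :=
  ∃ a b, a + b + 3 ≤ n ∧ D (a + 1) (b + 1) = u ∧ D a (b + 1) = l ∧ D (a + 1) b = r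

theorem IsDownKPieceAt.upFace_cases (hP : IsPuzzle123 n P) {x y : ℕ}
    (hK : IsDownKPieceAt n P x y) :
    P 2 x (y + 1) = 1 ∨ P 2 x (y + 1) = 3 ∧ P 1 x (y + 1) = 1 := by
  obtain ⟨hxy, -, -, ht⟩ := hK
  have := hP.isRainbow_upFace (x := x) (y := y + 1) (by omega)
  omega

theorem IsDownKPieceAt.exists_pattern (hP : IsPuzzle123 n P) (hleft : ∀ y < n, P 1 0 y ≠ 1)
    {x y : ℕ} (hK : IsDownKPieceAt n P x y) :
    HasEntryWithLowerRight n (P 2) 1 3 ∨ HasEntryWithLowerNeighbors n (P 2) 3 2 3 := by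
  induction x generalizing y with
  | zero =>
    rcases hK.upFace_cases hP with hu | ⟨-, hv⟩
    · exact Or.inl ⟨0, y, by have := hK.1; omega, hu, hK.2.1⟩
    · exact absurd hv (hleft _ (by have := hK.1; omega))
  | succ x ih =>
    rcases hK.upFace_cases hP with hu | ⟨hu, hv⟩
    · exact Or.inl ⟨x + 1, y, by have := hK.1; omega, hu, hK.2.1⟩
    obtain ⟨hxy, hl, -, -⟩ := hK
    have := hP.isRainbow_downFace (x := x) (y := y + 1) (by omega)
    rcases (by omega : P 2 x (y + 1) = 2 ∨ P 2 x (y + 1) = 3 ∧ P 0 x (y + 1 + 1) = 2)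
      with hl' | ⟨hl', ht'⟩
    · exact Or.inr ⟨x, y, by omega, hu, hl', hl⟩
    · exact ih ⟨by omega, hl', hv, ht'⟩

theorem HasEntryWithLowerRight.hasDownKPiece (hP : IsPuzzle123 n P)
    (h : HasEntryWithLowerRight n (P 2) 1 3) : HasDownKPiece n P := by
  obtain ⟨a, b, hab, hu, hr⟩ := h
  have := hP.isRainbow_downFace (x := a) (y := b) (by omega)
  have := hP.isRainbow_upFace (x := a) (y := b + 1) (by omega)
  exact ⟨a, b, by omega, hr, by omega, by omega⟩

theorem HasEntryWithLowerNeighbors.hasDownKPiece (hP : IsPuzzle123 n P)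
    (h : HasEntryWithLowerNeighbors n (P 2) 3 2 3) : HasDownKPiece n P := by
  obtain ⟨a, b, hab, hu, hl, hr⟩ := h
  have := hP.isRainbow_downFace (x := a + 1) (y := b) (by omega)
  have := hP.isRainbow_upFace (x := a + 1) (y := b + 1) (by omega)
  have := hP.isRainbow_downFace (x := a) (y := b + 1) (by omega)
  exact ⟨a + 1, b, by omega, hr, by omega, by omega⟩

theorem hasDownKPiece_iff_lowerRight (hP : IsPuzzle123 n P) (hleft : ∀ y < n, P 1 0 y ≠ 1) :
    HasDownKPiece n P ↔
      HasEntryWithLowerRight n (P 2) 1 3 ∨ HasEntryWithLowerNeighbors n (P 2) 3 2 3 := by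
  refine ⟨fun ⟨_, _, hK⟩ => hK.exists_pattern hP hleft, ?_⟩
  rintro (h | h) <;> exact h.hasDownKPiece hP

/-- The reflection of `Δ_n` in the bisector of the angle at the base point, which exchanges
horizontal and vertical edges, followed by the relabeling `1 ↔ 2`. -/
def reflect (P : ℕ → ℕ → ℕ → ℕ) : ℕ → ℕ → ℕ → ℕ :=
  fun d x y => Equiv.swap 1 2 (P (Equiv.swap 0 1 d) y x)

@[simp] theorem reflect_zero (x y : ℕ) : reflect P 0 x y = Equiv.swap 1 2 (P 1 y x) := by
  simp [reflect]

@[simp] theorem reflect_one (x y : ℕ) : reflect P 1 x y = Equiv.swap 1 2 (P 0 y x) := by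
  simp [reflect]

@[simp] theorem reflect_two (x y : ℕ) : reflect P 2 x y = Equiv.swap 1 2 (P 2 y x) := by
  simp [reflect, Equiv.swap_apply_of_ne_of_ne]

theorem reflect_reflect : reflect (reflect P) = P := by
  funext d x y
  simp [reflect]

theorem swap_one_two_mem_Icc {c : ℕ} (h : c ∈ Finset.Icc 1 3) :
    Equiv.swap 1 2 c ∈ Finset.Icc 1 3 := by
  rw [Finset.mem_Icc] at h ⊢
  rw [Equiv.swap_apply_def]
  split_ifs <;> omega

theorem IsPuzzle123.reflect (hP : IsPuzzle123 n P) : IsPuzzle123 n (reflect P) := by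
  obtain ⟨hrange, hup, hdown⟩ := hP
  have hne {a b : ℕ} : a ≠ b → Equiv.swap 1 2 a ≠ Equiv.swap 1 2 b :=
    (Equiv.swap 1 2).injective.ne
  refine ⟨fun d x y hd hxy => ?_, fun x y hxy => ?_, fun x y hxy => ?_⟩
  · refine swap_one_two_mem_Icc (hrange _ y x ?_ (by omega))
    rcases (by omega : d = 0 ∨ d = 1 ∨ d = 2) with rfl | rfl | rfl <;>
      simp [Equiv.swap_apply_of_ne_of_ne]
  · obtain ⟨h12, h10, h20⟩ := hup y x (by omega)
    simp only [reflect_zero, reflect_one, reflect_two]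
    exact ⟨hne h20.symm, hne h10.symm, hne h12.symm⟩
  · obtain ⟨h20, h21, h01⟩ := hdown y x (by omega)
    simp only [reflect_zero, reflect_one, reflect_two]
    exact ⟨hne h21, hne h20, hne h01.symm⟩

theorem HasDownKPiece.reflect (h : HasDownKPiece n P) : HasDownKPiece n (reflect P) := by
  obtain ⟨x, y, hxy, h2, h1, h0⟩ := h
  refine ⟨y, x, by omega, ?_, ?_, ?_⟩ <;> simp [Equiv.swap_apply_of_ne_of_ne, *]

theorem hasDownKPiece_reflect : HasDownKPiece n (reflect P) ↔ HasDownKPiece n P :=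
  ⟨fun h => reflect_reflect (P := P) ▸ h.reflect, HasDownKPiece.reflect⟩

theorem hasEntryWithLowerRight_transpose (σ : Equiv.Perm ℕ) {D : ℕ → ℕ → ℕ} {u r : ℕ} :
    HasEntryWithLowerRight n (fun a b => σ (D b a)) (σ u) (σ r) ↔
      HasEntryWithLowerLeft n D u r := by
  simp only [HasEntryWithLowerRight, HasEntryWithLowerLeft, σ.injective.eq_iff]
  constructor <;> rintro ⟨a, b, hab, hu, hr⟩ <;> exact ⟨b, a, by omega, hu, hr⟩

theorem hasEntryWithLowerNeighbors_transpose (σ : Equiv.Perm ℕ) {D : ℕ → ℕ → ℕ}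
    {u l r : ℕ} :
    HasEntryWithLowerNeighbors n (fun a b => σ (D b a)) (σ u) (σ l) (σ r) ↔
      HasEntryWithLowerNeighbors n D u r l := by
  simp only [HasEntryWithLowerNeighbors, σ.injective.eq_iff]
  constructor <;> rintro ⟨a, b, hab, hu, hl, hr⟩ <;> exact ⟨b, a, by omega, hu, hr, hl⟩

theorem hasDownKPiece_iff_lowerLeft (hP : IsPuzzle123 n P) (hbot : ∀ x < n, P 0 x 0 ≠ 2) :
    HasDownKPiece n P ↔
      HasEntryWithLowerLeft n (P 2) 2 3 ∨ HasEntryWithLowerNeighbors n (P 2) 3 3 1 := by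
  have hleft : ∀ y < n, reflect P 1 0 y ≠ 1 := fun y hy => by
    simpa [Equiv.swap_apply_eq_iff] using hbot y hy
  have hdiag : reflect P 2 = fun a b => Equiv.swap 1 2 (P 2 b a) := by
    funext a b
    exact reflect_two a b
  have hfix : Equiv.swap 1 2 3 = 3 := Equiv.swap_apply_of_ne_of_ne (by decide) (by decide)
  have hright := hasEntryWithLowerRight_transpose (n := n) (Equiv.swap 1 2) (D := P 2)
    (u := 2) (r := 3)
  have hboth := hasEntryWithLowerNeighbors_transpose (n := n) (Equiv.swap 1 2) (D := P 2)
    (u := 3) (l := 1) (r := 3)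
  simp only [Equiv.swap_apply_left, Equiv.swap_apply_right, hfix] at hright hboth
  rw [← hasDownKPiece_reflect, hasDownKPiece_iff_lowerRight hP.reflect hleft, hdiag, hright,
    hboth]

theorem TofP_two_of_le {j k : ℕ} (hj : 1 ≤ j) (hjk : j ≤ k) (hk : k ≤ n) :
    TofP n P 2 j k = P 2 (j - 1) (k - j) := by
  simp [TofP, hj, hjk, hk]

theorem exists_TofP_lowerRight_iff {u r : ℕ} :
    (∃ j k, 2 ≤ k ∧ k ≤ n ∧ 1 ≤ j ∧ j ≤ k - 1 ∧
      TofP n P 2 j k = u ∧ TofP n P 2 j (k - 1) = r) ↔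
    HasEntryWithLowerRight n (P 2) u r := by
  constructor
  · rintro ⟨j, k, -, hk, hj, hjk, hu, hr⟩
    simp (disch := omega) only [TofP_two_of_le] at hu hr
    refine ⟨j - 1, k - j - 1, by omega, ?_, ?_⟩
    · convert hu using 2; omega
    · convert hr using 2; omega
  · rintro ⟨a, b, hab, hu, hr⟩
    refine ⟨a + 1, a + b + 2, by omega, hab, by omega, by omega, ?_⟩
    simp (disch := omega) only [TofP_two_of_le]
    constructor
    · convert hu using 2 <;> omega
    · convert hr using 2 <;> omega

theorem exists_TofP_lowerLeft_iff {u l : ℕ} :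
    (∃ j k, 2 ≤ k ∧ k ≤ n ∧ 2 ≤ j ∧ j ≤ k ∧
      TofP n P 2 j k = u ∧ TofP n P 2 (j - 1) (k - 1) = l) ↔
    HasEntryWithLowerLeft n (P 2) u l := by
  constructor
  · rintro ⟨j, k, -, hk, hj, hjk, hu, hl⟩
    simp (disch := omega) only [TofP_two_of_le] at hu hl
    refine ⟨j - 2, k - j, by omega, ?_, ?_⟩
    · convert hu using 2; omega
    · convert hl using 2 <;> omega
  · rintro ⟨a, b, hab, hu, hl⟩
    refine ⟨a + 2, a + b + 2, by omega, hab, by omega, by omega, ?_⟩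
    simp (disch := omega) only [TofP_two_of_le]
    constructor
    · convert hu using 2 <;> omega
    · convert hl using 2 <;> omega

theorem exists_TofP_lowerNeighbors_iff {u l r : ℕ} :
    (∃ j k, 2 ≤ k ∧ k ≤ n ∧ 2 ≤ j ∧ j ≤ k - 1 ∧
      TofP n P 2 j k = u ∧ TofP n P 2 (j - 1) (k - 1) = l ∧ TofP n P 2 j (k - 1) = r) ↔
    HasEntryWithLowerNeighbors n (P 2) u l r := by
  constructor
  · rintro ⟨j, k, -, hk, hj, hjk, hu, hl, hr⟩
    simp (disch := omega) only [TofP_two_of_le] at hu hl hr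
    refine ⟨j - 2, k - j - 1, by omega, ?_, ?_, ?_⟩
    · convert hu using 2 <;> omega
    · convert hl using 2 <;> omega
    · convert hr using 2 <;> omega
  · rintro ⟨a, b, hab, hu, hl, hr⟩
    refine ⟨a + 2, a + b + 3, by omega, hab, by omega, by omega, ?_⟩
    simp (disch := omega) only [TofP_two_of_le]
    refine ⟨?_, ?_, ?_⟩
    · convert hu using 2 <;> omega
    · convert hl using 2 <;> omega
    · convert hr using 2 <;> omega

end

theorem avoid_down_K_piece_general (n : ℕ) (lam : ℕ → ℕ → ℕ)
    (h1 : ∀ j, 1 ≤ j → j ≤ n → lam 1 j = 2 ∨ lam 1 j = 3)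
    (h3 : ∀ j, 1 ≤ j → j ≤ n → lam 3 j = 1 ∨ lam 3 j = 3)
    (P : ℕ → ℕ → ℕ → ℕ) (hP : IsPuzzle123 n P)
    (hbd : ∀ j, 1 ≤ j → j ≤ n →
        P 1 0 (j - 1) = lam 1 j ∧ P 2 (j - 1) (n - j) = lam 2 j ∧
        P 0 (n - j) 0 = lam 3 j) :
    ((¬ ∃ x y, x + y + 1 < n ∧ P 2 x y = 3 ∧ P 1 (x + 1) y = 1 ∧ P 0 x (y + 1) = 2) ↔
      ((¬ ∃ j k, 2 ≤ k ∧ k ≤ n ∧ 1 ≤ j ∧ j ≤ k - 1 ∧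
          TofP n P 2 j k = 1 ∧ TofP n P 2 j (k - 1) = 3) ∧
       (¬ ∃ j k, 2 ≤ k ∧ k ≤ n ∧ 2 ≤ j ∧ j ≤ k - 1 ∧
          TofP n P 2 j k = 3 ∧ TofP n P 2 (j - 1) (k - 1) = 2 ∧
          TofP n P 2 j (k - 1) = 3))) ∧
    ((¬ ∃ x y, x + y + 1 < n ∧ P 2 x y = 3 ∧ P 1 (x + 1) y = 1 ∧ P 0 x (y + 1) = 2) ↔
      ((¬ ∃ j k, 2 ≤ k ∧ k ≤ n ∧ 2 ≤ j ∧ j ≤ k ∧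
          TofP n P 2 j k = 2 ∧ TofP n P 2 (j - 1) (k - 1) = 3) ∧
       (¬ ∃ j k, 2 ≤ k ∧ k ≤ n ∧ 2 ≤ j ∧ j ≤ k - 1 ∧
          TofP n P 2 j k = 3 ∧ TofP n P 2 (j - 1) (k - 1) = 3 ∧
          TofP n P 2 j (k - 1) = 1))) := by
  have hleft : ∀ y < n, P 1 0 y ≠ 1 := fun y hy => by
    have hb := (hbd (y + 1) (by omega) (by omega)).1
    rw [Nat.add_sub_cancel] at hb
    rcases h1 (y + 1) (by omega) (by omega) with h | h <;> omega
  have hbot : ∀ x < n, P 0 x 0 ≠ 2 := fun x hx => by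
    have hb := (hbd (n - x) (by omega) (by omega)).2.2
    rw [Nat.sub_sub_self hx.le] at hb
    rcases h3 (n - x) (by omega) (by omega) with h | h <;> omega
  rw [exists_TofP_lowerRight_iff, exists_TofP_lowerLeft_iff, exists_TofP_lowerNeighbors_iff,
    exists_TofP_lowerNeighbors_iff, ← not_or, ← not_or]
  exact ⟨(hasDownKPiece_iff_lowerRight hP hleft).not, (hasDownKPiece_iff_lowerLeft hP hbot).not⟩

/-- Avoiding the downward `1/2/3` `K`-piece (left edge `3`, right edge `1`, top
edge `2`) is equivalent to the pattern avoidance conditions (c) and (d) in the middle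
triangle `T^(2)` of `T = 𝒯(P)`. -/
theorem avoid_down_K_piece (n : ℕ) (hn : 1 ≤ n) (lam : ℕ → ℕ → ℕ)
    (h1 : ∀ j, 1 ≤ j → j ≤ n → lam 1 j = 2 ∨ lam 1 j = 3)
    (h2 : ∀ j, 1 ≤ j → j ≤ n → lam 2 j ∈ Finset.Icc 1 3)
    (h3 : ∀ j, 1 ≤ j → j ≤ n → lam 3 j = 1 ∨ lam 3 j = 3)
    (P : ℕ → ℕ → ℕ → ℕ) (hP : IsPuzzle123 n P)
    (hbd : ∀ j, 1 ≤ j → j ≤ n →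
        P 1 0 (j - 1) = lam 1 j ∧ P 2 (j - 1) (n - j) = lam 2 j ∧
        P 0 (n - j) 0 = lam 3 j) :
    ((¬ ∃ x y, x + y + 1 < n ∧ P 2 x y = 3 ∧ P 1 (x + 1) y = 1 ∧ P 0 x (y + 1) = 2) ↔
      ((¬ ∃ j k, 2 ≤ k ∧ k ≤ n ∧ 1 ≤ j ∧ j ≤ k - 1 ∧
          TofP n P 2 j k = 1 ∧ TofP n P 2 j (k - 1) = 3) ∧
       (¬ ∃ j k, 2 ≤ k ∧ k ≤ n ∧ 2 ≤ j ∧ j ≤ k - 1 ∧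
          TofP n P 2 j k = 3 ∧ TofP n P 2 (j - 1) (k - 1) = 2 ∧
          TofP n P 2 j (k - 1) = 3))) ∧
    ((¬ ∃ x y, x + y + 1 < n ∧ P 2 x y = 3 ∧ P 1 (x + 1) y = 1 ∧ P 0 x (y + 1) = 2) ↔
      ((¬ ∃ j k, 2 ≤ k ∧ k ≤ n ∧ 2 ≤ j ∧ j ≤ k ∧
          TofP n P 2 j k = 2 ∧ TofP n P 2 (j - 1) (k - 1) = 3) ∧
       (¬ ∃ j k, 2 ≤ k ∧ k ≤ n ∧ 2 ≤ j ∧ j ≤ k - 1 ∧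
          TofP n P 2 j k = 3 ∧ TofP n P 2 (j - 1) (k - 1) = 3 ∧
          TofP n P 2 j (k - 1) = 1))) :=
  avoid_down_K_piece_general n lam h1 h3 P hP hbd
end

section
/- For every n ≥ 1 and every string λ ∈ {1,2}^n, there is exactly one interlacing triangular array T of rank 2 and height n such that the top row of T^{(1)} equals λ; moreover this unique array satisfies T^{(2)} = (T^{(1)})†, where (T^{(1)})† is obtained from T^{(1)} by reversing each row and exchanging the letters 1 and 2. -/
/-- The set of interlacing triangular arrays of rank `m` and height `n`,
normalized to be `0` outside the support `1 ≤ i ≤ m`, `1 ≤ j ≤ k ≤ n`. -/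
def ITAFull (m n : ℕ) : Set (ℕ → ℕ → ℕ → ℕ) :=
  {T | IsITA m n T ∧ ∀ i j k, ¬(1 ≤ i ∧ i ≤ m ∧ 1 ≤ j ∧ j ≤ k ∧ k ≤ n) → T i j k = 0}

/-- The letter swap `1 ↔ 2`. -/
def swap12 (v : ℕ) : ℕ := if v = 1 then 2 else if v = 2 then 1 else v

/-!
In consecutive rows `k` and `k - 1` the horizontal coordinates alternate inside each triangle,
`x₁ < y₁ < x₂ < ⋯ < y_{k-1} < x_k`, and the first triangle lies entirely to the left of the
second. A letter occurs `k` times in row `k` and `k - 1` times in row `k - 1`, so by (b) its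
occurrences in the two rows interlace. Therefore, left of any cut, row `k - 1` has at most as
many copies of each letter as row `k` (and likewise to the right). At a cut that leaves the
same number of cells of both rows on one side, the two letters together are conserved, so each
count is equal. Cutting at every `y_j` shows that row `k - 1` of `T⁽¹⁾` is row `k` without its
last letter, and row `k - 1` of `T⁽²⁾` is row `k` without its first letter. So `T` is fixed by
its top rows. Condition (a) on row `k` then says that the ones among the first `k` letters of `λ`
and among the last `k` letters of the top row of `T⁽²⁾` number `k` in total, and this forces
that top row to be `λ†`. Conversely, the array with `T⁽²⁾ = (T⁽¹⁾)†` satisfies (a) and (b).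
-/

open Finset

section Interlace

variable {α : Type*} [LinearOrder α]

theorem card_filter_lt_le_card_filter_lt_add_one {S S' : Finset α}
    (hgap : ∀ p ∈ S, ∀ q ∈ S, p < q → ∃ r ∈ S', p < r ∧ r < q) (z : α) :
    #{x ∈ S | z < x} ≤ #{x ∈ S' | z < x} + 1 := by
  induction S using Finset.induction_on_min generalizing z with
  | empty => simp
  | insert a s ha ih =>
    have hgap_s : ∀ p ∈ s, ∀ q ∈ s, p < q → ∃ r ∈ S', p < r ∧ r < q :=
      fun p hp q hq => hgap p (mem_insert_of_mem hp) q (mem_insert_of_mem hq)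
    rw [filter_insert]
    split_ifs with hza
    · rw [card_insert_of_notMem fun h => (ha a (mem_filter.1 h).1).false]
      rcases s.eq_empty_or_nonempty with rfl | hs
      · simp
      obtain ⟨r, hrS', har, hrb⟩ := hgap a (mem_insert_self a s) (s.min' hs)
        (mem_insert_of_mem (s.min'_mem hs)) (ha _ (s.min'_mem hs))
      have hs_above_r : {x ∈ s | r < x} = {x ∈ s | z < x} := by
        refine filter_congr fun x hx => ?_
        have := s.min'_le x hx
        exact ⟨fun _ => hza.trans (ha x hx), fun _ => hrb.trans_le this⟩
      have hS'_above : insert r {x ∈ S' | r < x} ⊆ {x ∈ S' | z < x} := by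
        refine insert_subset (mem_filter.2 ⟨hrS', hza.trans har⟩) fun x hx => ?_
        rw [mem_filter] at hx ⊢
        exact ⟨hx.1, hza.trans (har.trans hx.2)⟩
      have := card_le_card hS'_above
      rw [card_insert_of_notMem (by simp)] at this
      have := ih hgap_s r
      rw [hs_above_r] at this
      omega
    · exact ih hgap_s z

theorem card_filter_le_le_card_filter_le {S S' : Finset α} (hcard : #S = #S' + 1)
    (hgap : ∀ p ∈ S, ∀ q ∈ S, p < q → ∃ r ∈ S', p < r ∧ r < q) (z : α) :
    #{x ∈ S' | x ≤ z} ≤ #{x ∈ S | x ≤ z} := by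
  have := card_filter_lt_le_card_filter_lt_add_one hgap z
  have hS := card_filter_add_card_filter_not (s := S) (fun x => x ≤ z)
  have hS' := card_filter_add_card_filter_not (s := S') (fun x => x ≤ z)
  simp only [not_le] at hS hS'
  omega

theorem card_filter_ge_le_card_filter_ge {S S' : Finset α} (hcard : #S = #S' + 1)
    (hgap : ∀ p ∈ S, ∀ q ∈ S, p < q → ∃ r ∈ S', p < r ∧ r < q) (z : α) :
    #{x ∈ S' | z ≤ x} ≤ #{x ∈ S | z ≤ x} :=
  card_filter_le_le_card_filter_le (α := αᵒᵈ) hcard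
    (fun p hp q hq hpq => (hgap q hq p hp hpq).imp fun _ ⟨hr, h₁, h₂⟩ => ⟨hr, h₂, h₁⟩) z

end Interlace

section Counting

variable {ι : Type*}

theorem iff_of_card_filter_insert_eq [DecidableEq ι] {s s' : Finset ι} {x y : ι}
    {P Q : ι → Prop} [DecidablePred P] [DecidablePred Q] (hx : x ∉ s) (hy : y ∉ s')
    (h : #{z ∈ insert x s | P z} = #{z ∈ insert y s' | Q z})
    (h' : #{z ∈ s | P z} = #{z ∈ s' | Q z}) : P x ↔ Q y := by
  have hx' : x ∉ {z ∈ s | P z} := fun hm => hx (mem_filter.1 hm).1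
  have hy' : y ∉ {z ∈ s' | Q z} := fun hm => hy (mem_filter.1 hm).1
  rw [filter_insert, filter_insert] at h
  by_cases hP : P x <;> by_cases hQ : Q y <;>
    simp only [hP, hQ, if_true, if_false, card_insert_of_notMem hx', card_insert_of_notMem hy']
      at h ⊢ <;> omega

theorem card_filter_one_add_card_filter_two {s : Finset ι} {f : ι → ℕ}
    (hf : ∀ x ∈ s, f x ∈ Icc 1 2) : #{x ∈ s | f x = 1} + #{x ∈ s | f x = 2} = #s := by
  rw [← card_filter_add_card_filter_not (s := s) (fun x => f x = 1)]
  congr 2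
  refine filter_congr fun x hx => ?_
  have := mem_Icc.1 (hf x hx)
  omega

theorem card_filter_eq_of_forall_le {κ : Type*} [DecidableEq κ] {s s' : Finset ι}
    {t : Finset κ} {f g : ι → κ} (hf : ∀ x ∈ s, f x ∈ t) (hg : ∀ x ∈ s', g x ∈ t)
    (hcard : #s = #s') (hle : ∀ a ∈ t, #{x ∈ s | f x = a} ≤ #{x ∈ s' | g x = a}) :
    ∀ a ∈ t, #{x ∈ s | f x = a} = #{x ∈ s' | g x = a} := by
  rw [card_eq_sum_card_fiberwise hf, card_eq_sum_card_fiberwise hg] at hcard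
  exact (sum_eq_sum_iff_of_le hle).1 hcard

end Counting

section Intervals

variable {P Q : ℕ → Prop} [DecidablePred P] [DecidablePred Q] {m t : ℕ}

theorem iff_of_card_filter_Icc_one_eq
    (h : ∀ j ≤ m, #{i ∈ Icc 1 j | P i} = #{i ∈ Icc 1 j | Q i}) (ht : 1 ≤ t) (htm : t ≤ m) :
    P t ↔ Q t := by
  obtain ⟨t, rfl⟩ := Nat.exists_eq_add_of_le' ht
  refine iff_of_card_filter_insert_eq (P := P) (Q := Q) (s := Icc 1 t) (s' := Icc 1 t)
    (by simp) (by simp) ?_ (h t (by omega))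
  rw [insert_Icc_right_eq_Icc_add_one (by omega)]
  exact h _ htm

theorem iff_of_card_filter_Icc_eq
    (h : ∀ j, 1 ≤ j → j ≤ m + 1 → #{i ∈ Icc j m | P i} = #{i ∈ Icc (j + 1) (m + 1) | Q i})
    (ht : 1 ≤ t) (htm : t ≤ m) : P t ↔ Q (t + 1) := by
  refine iff_of_card_filter_insert_eq (P := P) (Q := Q) (s := Icc (t + 1) m)
    (s' := Icc (t + 1 + 1) (m + 1)) (by simp) (by simp) ?_ (h (t + 1) (by omega) (by omega))
  rw [insert_Icc_add_one_left_eq_Icc htm, insert_Icc_add_one_left_eq_Icc (by omega)]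
  exact h t ht (by omega)

theorem card_filter_Icc_one_reflect (k : ℕ) (P : ℕ → Prop) [DecidablePred P] :
    #{t ∈ Icc 1 k | P (k + 1 - t)} = #{t ∈ Icc 1 k | P t} := by
  refine card_nbij' (fun t => k + 1 - t) (fun t => k + 1 - t) ?_ ?_ ?_ ?_ <;>
    intro t ht <;> simp only [coe_filter, mem_Icc, Set.mem_ofPred_eq] at ht ⊢
  · exact ⟨by omega, ht.2⟩
  · exact ⟨by omega, by rw [show k + 1 - (k + 1 - t) = t by omega]; exact ht.2⟩
  · omega
  · omega

end Intervals

theorem swap12_swap12 (v : ℕ) : swap12 (swap12 v) = v := by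
  unfold swap12
  split_ifs <;> omega

theorem swap12_eq_iff {v a : ℕ} : swap12 v = a ↔ v = swap12 a :=
  ⟨fun h => h ▸ (swap12_swap12 v).symm, fun h => h ▸ swap12_swap12 a⟩

theorem swap12_mem_Icc {v : ℕ} (hv : v ∈ Icc 1 2) : swap12 v ∈ Icc 1 2 := by
  rw [mem_Icc] at hv ⊢
  unfold swap12
  split_ifs <;> omega

theorem swap12_ne_self {v : ℕ} (hv : v ∈ Icc 1 2) : swap12 v ≠ v := by
  rw [mem_Icc] at hv
  unfold swap12
  split_ifs <;> omega

def rowCells (r : ℕ) : Finset (ℕ × ℕ) := Icc 1 2 ×ˢ Icc 1 r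

theorem card_filter_rowCells (r : ℕ) (P : ℕ × ℕ → Prop) [DecidablePred P] :
    #{p ∈ rowCells r | P p} = #{t ∈ Icc 1 r | P (1, t)} + #{t ∈ Icc 1 r | P (2, t)} := by
  rw [card_filter, rowCells, sum_product, show Icc 1 2 = {1, 2} by rfl, sum_pair (by decide),
    card_filter, card_filter]

theorem card_filter_singleton_product (i : ℕ) (s : Finset ℕ) (P : ℕ × ℕ → Prop)
    [DecidablePred P] : #{p ∈ {i} ×ˢ s | P p} = #{t ∈ s | P (i, t)} := by
  rw [singleton_product, filter_map, card_map]
  rfl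

section Positions

variable {n r j : ℕ} {z : ℤ}

theorem Hc_add_one_lt {i j' i' k : ℕ} (h : Hc n i j k < Hc n i' j' k) :
    Hc n i j k + 1 < Hc n i' j' k := by
  unfold Hc at *
  omega

theorem Hc_injOn (hr : r ≤ n) : Set.InjOn (fun p : ℕ × ℕ => Hc n p.1 p.2 r) (rowCells r) := by
  rintro ⟨i, j⟩ hp ⟨i', j'⟩ hq h
  simp only [rowCells, coe_product, Set.mem_prod, coe_Icc, Set.mem_Icc, Hc] at hp hq h
  obtain ⟨⟨hi1, hi2⟩, hj1, hjr⟩ := hp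
  obtain ⟨⟨hi1', hi2'⟩, hj1', hjr'⟩ := hq
  rw [Prod.mk.injEq]
  interval_cases i <;> interval_cases i' <;> omega

theorem rowCells_filter_Hc_le (hjr : j ≤ r) (hrn : r ≤ n) (hz : Hc n 1 j r ≤ z)
    (hz' : z < Hc n 1 j r + 2) :
    {p ∈ rowCells r | Hc n p.1 p.2 r ≤ z} = {1} ×ˢ Icc 1 j := by
  ext ⟨i, t⟩
  simp only [rowCells, mem_filter, mem_product, mem_Icc, mem_singleton]
  simp only [Hc] at hz hz' ⊢
  constructor
  · rintro ⟨⟨⟨hi1, hi2⟩, ht1, htr⟩, h⟩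
    interval_cases i <;> omega
  · rintro ⟨rfl, ht1, htj⟩
    omega

theorem rowCells_filter_le_Hc (hj : 1 ≤ j) (hrn : r ≤ n) (hz : z ≤ Hc n 2 j r)
    (hz' : Hc n 2 j r < z + 2) :
    {p ∈ rowCells r | z ≤ Hc n p.1 p.2 r} = {2} ×ˢ Icc j r := by
  ext ⟨i, t⟩
  simp only [rowCells, mem_filter, mem_product, mem_Icc, mem_singleton]
  simp only [Hc] at hz hz' ⊢
  constructor
  · rintro ⟨⟨⟨hi1, hi2⟩, ht1, htr⟩, h⟩
    interval_cases i <;> omega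
  · rintro ⟨rfl, hjt, htr⟩
    omega

end Positions

def letterPos (n : ℕ) (T : ℕ → ℕ → ℕ → ℕ) (r a : ℕ) : Finset ℤ :=
  {p ∈ rowCells r | T p.1 p.2 r = a}.image fun p => Hc n p.1 p.2 r

section Letters

variable {n r a : ℕ} {T : ℕ → ℕ → ℕ → ℕ}

theorem card_filter_letterPos (hr : r ≤ n) (P : ℤ → Prop) [DecidablePred P] :
    #{x ∈ letterPos n T r a | P x} =
      #{p ∈ {p ∈ rowCells r | P (Hc n p.1 p.2 r)} | T p.1 p.2 r = a} := by
  rw [letterPos, filter_image, card_image_of_injOn ((Hc_injOn hr).mono fun p hp =>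
    (mem_filter.1 (mem_filter.1 hp).1).1), filter_filter, filter_filter]
  simp only [and_comm]

theorem card_filter_letterPos_le {j : ℕ} {z : ℤ} (hjr : j ≤ r) (hrn : r ≤ n)
    (hz : Hc n 1 j r ≤ z) (hz' : z < Hc n 1 j r + 2) :
    #{x ∈ letterPos n T r a | x ≤ z} = #{t ∈ Icc 1 j | T 1 t r = a} := by
  rw [card_filter_letterPos hrn, rowCells_filter_Hc_le hjr hrn hz hz',
    card_filter_singleton_product]

theorem card_filter_le_letterPos {j : ℕ} {z : ℤ} (hj : 1 ≤ j) (hrn : r ≤ n)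
    (hz : z ≤ Hc n 2 j r) (hz' : Hc n 2 j r < z + 2) :
    #{x ∈ letterPos n T r a | z ≤ x} = #{t ∈ Icc j r | T 2 t r = a} := by
  rw [card_filter_letterPos hrn, rowCells_filter_le_Hc hj hrn hz hz',
    card_filter_singleton_product]

theorem IsITA.apply_mem_Icc (hT : IsITA 2 n T) {i j k : ℕ} (hi : i ∈ Icc 1 2) (hj : 1 ≤ j)
    (hjk : j ≤ k) (hkn : k ≤ n) : T i j k ∈ Icc 1 2 :=
  hT.1 i j k (mem_Icc.1 hi).1 (mem_Icc.1 hi).2 hj hjk hkn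

theorem IsITA.card_filter_rowCells_apply_eq (hT : IsITA 2 n T) (hr : 1 ≤ r) (hrn : r ≤ n)
    (ha : a ∈ Icc 1 2) : #{p ∈ rowCells r | T p.1 p.2 r = a} = r :=
  hT.2.1 r hr hrn a ha

theorem IsITA.card_letterPos (hT : IsITA 2 n T) (hr : 1 ≤ r) (hrn : r ≤ n) (ha : a ∈ Icc 1 2) :
    #(letterPos n T r a) = r := by
  rw [letterPos, card_image_of_injOn ((Hc_injOn hrn).mono (filter_subset _ _))]
  exact hT.card_filter_rowCells_apply_eq hr hrn ha

theorem IsITA.exists_letterPos_between (hT : IsITA 2 n T) (hrn : r + 1 ≤ n) :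
    ∀ p ∈ letterPos n T (r + 1) a, ∀ q ∈ letterPos n T (r + 1) a, p < q →
      ∃ x ∈ letterPos n T r a, p < x ∧ x < q := by
  simp only [letterPos, rowCells, mem_image, mem_filter, mem_product, mem_Icc]
  rintro _ ⟨⟨i, j⟩, ⟨⟨⟨hi1, hi2⟩, hj1, hjr⟩, rfl⟩, rfl⟩ _
    ⟨⟨i', j'⟩, ⟨⟨⟨hi1', hi2'⟩, hj1', hjr'⟩, hTa⟩, rfl⟩ hlt
  obtain ⟨i'', j'', hi1'', hi2'', hj1'', hjr'', hT'', hlt₁, hlt₂⟩ :=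
    hT.2.2 (r + 1) (by omega) hrn i j i' j' hi1 hi2 hj1 hjr hi1' hi2' hj1' hjr' hTa.symm hlt
  exact ⟨_, ⟨(i'', j''), ⟨⟨⟨hi1'', hi2''⟩, hj1'', hjr''⟩, hT''⟩, rfl⟩, hlt₁, hlt₂⟩

theorem IsITA.card_filter_letterPos_le_succ (hT : IsITA 2 n T) (hr : 1 ≤ r) (hrn : r + 1 ≤ n)
    (ha : a ∈ Icc 1 2) (z : ℤ) :
    #{x ∈ letterPos n T r a | x ≤ z} ≤ #{x ∈ letterPos n T (r + 1) a | x ≤ z} :=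
  card_filter_le_le_card_filter_le
    (by rw [hT.card_letterPos hr (by omega) ha, hT.card_letterPos (by omega) hrn ha])
    (hT.exists_letterPos_between hrn) z

theorem IsITA.card_filter_le_letterPos_succ (hT : IsITA 2 n T) (hr : 1 ≤ r) (hrn : r + 1 ≤ n)
    (ha : a ∈ Icc 1 2) (z : ℤ) :
    #{x ∈ letterPos n T r a | z ≤ x} ≤ #{x ∈ letterPos n T (r + 1) a | z ≤ x} :=
  card_filter_ge_le_card_filter_ge
    (by rw [hT.card_letterPos hr (by omega) ha, hT.card_letterPos (by omega) hrn ha])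
    (hT.exists_letterPos_between hrn) z

end Letters

section Rows

variable {n r j : ℕ} {T : ℕ → ℕ → ℕ → ℕ}

theorem IsITA.row_one_eq_succ (hT : IsITA 2 n T) (hr : 1 ≤ r) (hrn : r + 1 ≤ n) (hj : 1 ≤ j)
    (hjr : j ≤ r) : T 1 j r = T 1 j (r + 1) := by
  have hcount : ∀ i ≤ r, ∀ a ∈ Icc 1 2,
      #{t ∈ Icc 1 i | T 1 t r = a} = #{t ∈ Icc 1 i | T 1 t (r + 1) = a} := by
    intro i hi
    refine card_filter_eq_of_forall_le
      (fun t ht => hT.apply_mem_Icc (by simp) (mem_Icc.1 ht).1 (by grind) (by omega))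
      (fun t ht => hT.apply_mem_Icc (by simp) (mem_Icc.1 ht).1 (by grind) hrn) rfl
      fun a ha => ?_
    -- the cut `Hc n 1 i r` separates the first `i` cells of the first triangle in both rows
    rw [← card_filter_letterPos_le (z := Hc n 1 i r) hi (by omega) le_rfl (by omega),
      ← card_filter_letterPos_le (z := Hc n 1 i r) (by omega) hrn
        (by unfold Hc; push_cast; omega) (by unfold Hc; push_cast; omega)]
    exact hT.card_filter_letterPos_le_succ hr hrn ha _
  exact (iff_of_card_filter_Icc_one_eq
    (fun i hi => hcount i hi _ (hT.apply_mem_Icc (by simp) hj (by omega) hrn)) hj hjr).2 rfl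

theorem IsITA.row_two_eq_succ (hT : IsITA 2 n T) (hr : 1 ≤ r) (hrn : r + 1 ≤ n) (hj : 1 ≤ j)
    (hjr : j ≤ r) : T 2 j r = T 2 (j + 1) (r + 1) := by
  have hcount : ∀ i, 1 ≤ i → i ≤ r + 1 → ∀ a ∈ Icc 1 2,
      #{t ∈ Icc i r | T 2 t r = a} = #{t ∈ Icc (i + 1) (r + 1) | T 2 t (r + 1) = a} := by
    intro i hi hir
    refine card_filter_eq_of_forall_le
      (fun t ht => hT.apply_mem_Icc (by simp) (by grind) (mem_Icc.1 ht).2 (by omega))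
      (fun t ht => hT.apply_mem_Icc (by simp) (by grind) (mem_Icc.1 ht).2 hrn)
      (by simp only [Nat.card_Icc]; omega) fun a ha => ?_
    rw [← card_filter_le_letterPos (z := Hc n 2 i r) hi (by omega) le_rfl (by omega),
      ← card_filter_le_letterPos (z := Hc n 2 i r) (by omega) hrn
        (by unfold Hc; push_cast; omega) (by unfold Hc; push_cast; omega)]
    exact hT.card_filter_le_letterPos_succ hr hrn ha _
  exact (iff_of_card_filter_Icc_eq
    (fun i hi hir => hcount i hi hir _ (hT.apply_mem_Icc (by simp) (by omega) (by omega) hrn))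
    hj hjr).2 rfl

theorem IsITA.rows_eq_shift (hT : IsITA 2 n T) (hj : 1 ≤ j) {k : ℕ} (hjk : j ≤ k) :
    ∀ d, k + d ≤ n → T 1 j k = T 1 j (k + d) ∧ T 2 j k = T 2 (j + d) (k + d)
  | 0, _ => ⟨rfl, rfl⟩
  | d + 1, h => by
    obtain ⟨h₁, h₂⟩ := hT.rows_eq_shift hj hjk d (by omega)
    have hkd : k + d + 1 ≤ n := by omega
    rw [← Nat.add_assoc, ← Nat.add_assoc, h₁, h₂]
    exact ⟨hT.row_one_eq_succ (by omega) hkd hj (by omega),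
      hT.row_two_eq_succ (by omega) hkd (by omega) (by omega)⟩

theorem IsITA.rows_eq_top (hT : IsITA 2 n T) {k : ℕ} (hj : 1 ≤ j) (hjk : j ≤ k)
    (hkn : k ≤ n) : T 1 j k = T 1 j n ∧ T 2 j k = T 2 (j + (n - k)) n := by
  simpa [Nat.add_sub_cancel' hkn] using hT.rows_eq_shift hj hjk (n - k) (by omega)

theorem IsITA.row_two_top_eq_swap12 (hT : IsITA 2 n T) {s : ℕ} (hs : 1 ≤ s) (hsn : s ≤ n) :
    T 2 s n = swap12 (T 1 (n + 1 - s) n) := by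
  set w : ℕ → ℕ := fun t => T 2 (n + 1 - t) n
  have hw_mem : ∀ k ≤ n, ∀ t ∈ Icc 1 k, w t ∈ Icc 1 2 := fun k hk t ht =>
    hT.apply_mem_Icc (by simp) (by grind) (by grind) le_rfl
  have hrow : ∀ k ≤ n, #{t ∈ Icc 1 k | T 1 t n = 1} + #{t ∈ Icc 1 k | w t = 1} = k := by
    intro k hkn
    rcases Nat.eq_zero_or_pos k with rfl | hk
    · simp
    refine Eq.trans ?_ (hT.card_filter_rowCells_apply_eq hk hkn (a := 1) (by simp))
    rw [card_filter_rowCells, ← card_filter_Icc_one_reflect k (fun t => w t = 1)]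
    congr 1 <;> refine congrArg card (filter_congr fun t ht => ?_) <;> rw [mem_Icc] at ht
    · rw [(hT.rows_eq_top ht.1 ht.2 hkn).1]
    · rw [(hT.rows_eq_top ht.1 ht.2 hkn).2, show t + (n - k) = n + 1 - (k + 1 - t) by omega]
  have hletter : T 1 (n + 1 - s) n = 1 ↔ T 2 s n = 2 := by
    convert iff_of_card_filter_Icc_one_eq (m := n) (t := n + 1 - s)
      (P := fun t => T 1 t n = 1) (Q := fun t => w t = 2) (fun k hk => ?_) (by omega) (by omega)
    · omega
    · have := card_filter_one_add_card_filter_two (hw_mem k hk)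
      rw [Nat.card_Icc] at this
      have := hrow k hk
      omega
  have h₁ := mem_Icc.1 (hT.apply_mem_Icc (i := 1) (j := n + 1 - s) (by simp) (by omega)
    (by omega) le_rfl)
  have h₂ := mem_Icc.1 (hT.apply_mem_Icc (i := 2) (by simp) hs hsn le_rfl)
  rcases (show T 1 (n + 1 - s) n = 1 ∨ T 1 (n + 1 - s) n = 2 by omega) with h | h <;>
    simp [h, swap12] at hletter ⊢ <;> omega

end Rows

def rankTwoArray (n : ℕ) (lam : ℕ → ℕ) (i j k : ℕ) : ℕ :=
  if 1 ≤ j ∧ j ≤ k ∧ k ≤ n then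
    if i = 1 then lam j else if i = 2 then swap12 (lam (k + 1 - j)) else 0
  else 0

section RankTwoArray

variable {n : ℕ} {lam : ℕ → ℕ} {i j k : ℕ}

theorem rankTwoArray_one (hj : 1 ≤ j) (hjk : j ≤ k) (hkn : k ≤ n) :
    rankTwoArray n lam 1 j k = lam j := by
  simp [rankTwoArray, hj, hjk, hkn]

theorem rankTwoArray_two (hj : 1 ≤ j) (hjk : j ≤ k) (hkn : k ≤ n) :
    rankTwoArray n lam 2 j k = swap12 (lam (k + 1 - j)) := by
  simp [rankTwoArray, hj, hjk, hkn]

theorem rankTwoArray_eq_zero (h : ¬(1 ≤ i ∧ i ≤ 2 ∧ 1 ≤ j ∧ j ≤ k ∧ k ≤ n)) :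
    rankTwoArray n lam i j k = 0 := by
  unfold rankTwoArray
  split_ifs <;> omega

variable (hlam : ∀ j, 1 ≤ j → j ≤ n → lam j ∈ Icc 1 2)
include hlam

theorem rankTwoArray_mem_Icc (hi : i ∈ Icc 1 2) (hj : 1 ≤ j) (hjk : j ≤ k) (hkn : k ≤ n) :
    rankTwoArray n lam i j k ∈ Icc 1 2 := by
  obtain rfl | rfl : i = 1 ∨ i = 2 := by grind
  · rw [rankTwoArray_one hj hjk hkn]
    exact hlam j hj (by omega)
  · rw [rankTwoArray_two hj hjk hkn]
    exact swap12_mem_Icc (hlam _ (by omega) (by omega))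

theorem card_filter_rankTwoArray_eq (hkn : k ≤ n) {a : ℕ} (ha : a ∈ Icc 1 2) :
    #{p ∈ rowCells k | rankTwoArray n lam p.1 p.2 k = a} = k := by
  have hsum := card_filter_one_add_card_filter_two (s := Icc 1 k) fun t ht =>
    hlam t (mem_Icc.1 ht).1 (by grind)
  rw [Nat.card_Icc, Nat.add_sub_cancel] at hsum
  rw [card_filter_rowCells]
  have hdual :
      #{t ∈ Icc 1 k | rankTwoArray n lam 2 t k = a} = #{t ∈ Icc 1 k | lam t = swap12 a} := by
    rw [← card_filter_Icc_one_reflect k (fun t => lam t = swap12 a)]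
    refine congrArg card (filter_congr fun t ht => ?_)
    rw [mem_Icc] at ht
    rw [rankTwoArray_two ht.1 ht.2 hkn, swap12_eq_iff]
  have hone : #{t ∈ Icc 1 k | rankTwoArray n lam 1 t k = a} = #{t ∈ Icc 1 k | lam t = a} := by
    refine congrArg card (filter_congr fun t ht => ?_)
    rw [rankTwoArray_one (mem_Icc.1 ht).1 (mem_Icc.1 ht).2 hkn]
  rw [hone, hdual]
  obtain rfl | rfl : a = 1 ∨ a = 2 := by grind
  · exact hsum
  · rw [add_comm]; exact hsum

theorem rankTwoArray_interlace (hk : 1 ≤ k) (hkn : k ≤ n) {i' j' : ℕ} (hi : i ∈ Icc 1 2)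
    (hj : 1 ≤ j) (hjk : j ≤ k) (hi' : i' ∈ Icc 1 2) (hj' : 1 ≤ j') (hjk' : j' ≤ k)
    (heq : rankTwoArray n lam i j k = rankTwoArray n lam i' j' k)
    (hlt : Hc n i j k < Hc n i' j' k) :
    ∃ i'' j'', 1 ≤ i'' ∧ i'' ≤ 2 ∧ 1 ≤ j'' ∧ j'' ≤ k - 1 ∧
      rankTwoArray n lam i'' j'' (k - 1) = rankTwoArray n lam i j k ∧
      Hc n i j k < Hc n i'' j'' (k - 1) ∧ Hc n i'' j'' (k - 1) < Hc n i' j' k := by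
  have hgap := Hc_add_one_lt hlt
  -- the witness in row `k - 1` sits just right of `(1, j)`, or else just left of `(2, j')`
  by_cases h : i = 1 ∧ j < k
  · obtain ⟨rfl, hjk⟩ := h
    refine ⟨1, j, le_rfl, one_le_two, hj, by omega, ?_, ?_, ?_⟩
    · rw [rankTwoArray_one hj (by omega) (by omega), rankTwoArray_one hj (by omega) hkn]
    all_goals
      unfold Hc at *
      push_cast [Nat.cast_sub hk] at *
      omega
  · obtain ⟨rfl, hj'2⟩ : i' = 2 ∧ 2 ≤ j' := by
      obtain ⟨hi1, hi2⟩ := mem_Icc.1 hi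
      obtain ⟨hi1', hi2'⟩ := mem_Icc.1 hi'
      unfold Hc at hlt
      interval_cases i <;> interval_cases i' <;> try omega
      refine ⟨rfl, (Nat.two_le_iff _).2 ⟨by omega, fun hj'1 => ?_⟩⟩
      rw [show j = k by omega, rankTwoArray_one hk le_rfl hkn, rankTwoArray_two hj' hjk' hkn,
        hj'1, Nat.add_sub_cancel] at heq
      exact swap12_ne_self (hlam k hk hkn) heq.symm
    refine ⟨2, j' - 1, one_le_two, le_rfl, by omega, by omega, ?_, ?_, ?_⟩
    · rw [heq, rankTwoArray_two (by omega) (by omega) (by omega), rankTwoArray_two hj' hjk' hkn]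
      congr 2
      omega
    all_goals
      unfold Hc at *
      push_cast [Nat.cast_sub hk, Nat.cast_sub (by omega : 1 ≤ j')] at *
      omega

theorem rankTwoArray_mem_ITAFull : rankTwoArray n lam ∈ ITAFull 2 n :=
  ⟨⟨fun _ _ _ hi1 hi2 hj hjk hkn => rankTwoArray_mem_Icc hlam (mem_Icc.2 ⟨hi1, hi2⟩) hj hjk hkn,
    fun _ _ hkn _ ha => card_filter_rankTwoArray_eq hlam hkn ha,
    fun _ hk hkn _ _ _ _ hi1 hi2 hj hjk hi1' hi2' hj' hjk' heq hlt =>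
      rankTwoArray_interlace hlam hk hkn (mem_Icc.2 ⟨hi1, hi2⟩) hj hjk (mem_Icc.2 ⟨hi1', hi2'⟩)
        hj' hjk' heq hlt⟩,
    fun _ _ _ => rankTwoArray_eq_zero⟩

end RankTwoArray

theorem eq_rankTwoArray {n : ℕ} {lam : ℕ → ℕ} {T : ℕ → ℕ → ℕ → ℕ} (hT : T ∈ ITAFull 2 n)
    (htop : ∀ j, 1 ≤ j → j ≤ n → T 1 j n = lam j) : T = rankTwoArray n lam := by
  funext i j k
  by_cases hcell : 1 ≤ i ∧ i ≤ 2 ∧ 1 ≤ j ∧ j ≤ k ∧ k ≤ n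
  · obtain ⟨hi1, hi2, hj, hjk, hkn⟩ := hcell
    obtain ⟨h₁, h₂⟩ := hT.1.rows_eq_top hj hjk hkn
    interval_cases i
    · rw [h₁, htop j hj (by omega), rankTwoArray_one hj hjk hkn]
    · rw [h₂, hT.1.row_two_top_eq_swap12 (by omega) (by omega), htop _ (by omega) (by omega),
        rankTwoArray_two hj hjk hkn, show n + 1 - (j + (n - k)) = k + 1 - j by omega]
  · rw [hT.2 i j k hcell, rankTwoArray_eq_zero hcell]

theorem rank_two_unique_general (n : ℕ) (lam : ℕ → ℕ)
    (hlam : ∀ j, 1 ≤ j → j ≤ n → lam j = 1 ∨ lam j = 2) :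
    (∃! T, T ∈ ITAFull 2 n ∧ ∀ j, 1 ≤ j → j ≤ n → T 1 j n = lam j) ∧
    (∀ T, T ∈ ITAFull 2 n → (∀ j, 1 ≤ j → j ≤ n → T 1 j n = lam j) →
        ∀ j k, 1 ≤ j → j ≤ k → k ≤ n → T 2 j k = swap12 (T 1 (k + 1 - j) k)) := by
  have hlam' : ∀ j, 1 ≤ j → j ≤ n → lam j ∈ Icc 1 2 := fun j hj hjn => by
    rcases hlam j hj hjn with h | h <;> simp [h]
  refine ⟨⟨rankTwoArray n lam,
    ⟨rankTwoArray_mem_ITAFull hlam', fun j hj hjn => rankTwoArray_one hj hjn le_rfl⟩,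
    fun T hT => eq_rankTwoArray hT.1 hT.2⟩, ?_⟩
  intro T hT htop j k hj hjk hkn
  rw [eq_rankTwoArray hT htop, rankTwoArray_two hj hjk hkn,
    rankTwoArray_one (by omega) (by omega) hkn]

/-- For every `n ≥ 1` and every string `λ ∈ {1,2}^n`, there is exactly one interlacing
triangular array `T` of rank `2` and height `n` whose first triangle has top row `λ`;
moreover this unique array satisfies `T^(2) = (T^(1))†`, i.e. each row of `T^(2)` is
the corresponding row of `T^(1)` reversed with the letters `1` and `2` exchanged. -/
theorem rank_two_unique (n : ℕ) (hn : 1 ≤ n) (lam : ℕ → ℕ)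
    (hlam : ∀ j, 1 ≤ j → j ≤ n → lam j = 1 ∨ lam j = 2) :
    (∃! T, T ∈ ITAFull 2 n ∧ ∀ j, 1 ≤ j → j ≤ n → T 1 j n = lam j) ∧
    (∀ T, T ∈ ITAFull 2 n → (∀ j, 1 ≤ j → j ≤ n → T 1 j n = lam j) →
        ∀ j k, 1 ≤ j → j ≤ k → k ≤ n → T 2 j k = swap12 (T 1 (k + 1 - j) k)) :=
  rank_two_unique_general n lam hlam
end

section
/- Let P be a 1/2/3-puzzle on Δ_n. Then for every k = 1,…,n and every label a ∈ {1,2,3}, exactly k of the 3k boundary edges of the copy of Δ_k inside Δ_n are labeled a by P. -/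
open Finset

lemma ite_add_ite_add_ite_eq_one_s18 {p₁ p₂ p₃ a : ℕ} (h₁ : p₁ ∈ Icc 1 3) (h₂ : p₂ ∈ Icc 1 3)
    (h₃ : p₃ ∈ Icc 1 3) (ha : a ∈ Icc 1 3) (h₁₂ : p₁ ≠ p₂) (h₁₃ : p₁ ≠ p₃) (h₂₃ : p₂ ≠ p₃) :
    (if p₁ = a then 1 else 0) + (if p₂ = a then 1 else 0) + (if p₃ = a then 1 else 0) = 1 := by
  simp only [mem_Icc] at h₁ h₂ h₃ ha
  split_ifs <;> omega

section FaceWeights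

variable {n : ℕ} {c : ℕ → ℕ → ℕ → ℕ}

lemma sum_upward_diagonal (hup : ∀ x y, x + y < n → c 1 x y + c 2 x y + c 0 x y = 1)
    {k : ℕ} (hk : k < n) :
    ∑ x ∈ range (k + 1), (c 1 x (k - x) + c 2 x (k - x) + c 0 x (k - x)) = k + 1 := by
  refine (sum_const_nat fun x hx => hup x (k - x) ?_).trans (by simp)
  rw [mem_range] at hx
  omega

lemma sum_downward_diagonal
    (hdown : ∀ x y, x + y + 1 < n → c 2 x y + c 0 x (y + 1) + c 1 (x + 1) y = 1)
    {k : ℕ} (hk : k < n) :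
    ∑ x ∈ range k, (c 2 x (k - 1 - x) + c 0 x (k - x) + c 1 (x + 1) (k - 1 - x)) = k := by
  refine (sum_const_nat (m := 1) fun x hx => ?_).trans (by simp)
  rw [mem_range] at hx
  rw [show k - x = k - 1 - x + 1 by omega]
  exact hdown x (k - 1 - x) (by omega)

lemma sum_boundary_eq_of_face_sums_eq_one (hup : ∀ x y, x + y < n → c 1 x y + c 2 x y + c 0 x y = 1)
    (hdown : ∀ x y, x + y + 1 < n → c 2 x y + c 0 x (y + 1) + c 1 (x + 1) y = 1)
    {k : ℕ} (hkn : k ≤ n) :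
    ∑ y ∈ range k, c 1 0 y + ∑ x ∈ range k, c 2 x (k - 1 - x) + ∑ x ∈ range k, c 0 x 0 = k := by
  induction k with
  | zero => simp
  | succ k ih =>
    have hU := sum_upward_diagonal hup (k := k) (by omega)
    have hD := sum_downward_diagonal hdown (k := k) (by omega)
    simp only [sum_add_distrib] at hU hD
    have hleft : ∑ x ∈ range (k + 1), c 1 x (k - x)
        = c 1 0 k + ∑ x ∈ range k, c 1 (x + 1) (k - 1 - x) := by
      rw [sum_range_succ', add_comm, Nat.sub_zero]
      congr 1
      exact sum_congr rfl fun x _ => by rw [Nat.sub_add_eq, Nat.sub_right_comm]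
    rw [hleft, sum_range_succ (fun x => c 0 x (k - x)), Nat.sub_self] at hU
    rw [sum_range_succ (fun y => c 1 0 y), sum_range_succ (fun x => c 0 x 0), Nat.add_sub_cancel]
    have := ih (by omega)
    omega

end FaceWeights

theorem boundary_label_count_general (n : ℕ) (P : ℕ → ℕ → ℕ → ℕ) (hP : IsPuzzle123 n P)
    (k : ℕ) (hkn : k ≤ n) (a : ℕ) (ha : a ∈ Finset.Icc 1 3) :
    ((Finset.range k).filter (fun y => P 1 0 y = a)).card
      + ((Finset.range k).filter (fun x => P 2 x (k - 1 - x) = a)).card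
      + ((Finset.range k).filter (fun x => P 0 x 0 = a)).card = k := by
  obtain ⟨hlabel, hup, hdown⟩ := hP
  simp only [card_filter]
  refine sum_boundary_eq_of_face_sums_eq_one (c := fun d x y => if P d x y = a then 1 else 0) (fun x y h => ?_)
    (fun x y h => ?_) hkn
  · obtain ⟨h₁₂, h₁₃, h₂₃⟩ := hup x y h
    exact ite_add_ite_add_ite_eq_one_s18 (hlabel 1 x y (by norm_num) h) (hlabel 2 x y (by norm_num) h)
      (hlabel 0 x y (by norm_num) h) ha h₁₂ h₁₃ h₂₃
  · obtain ⟨h₁₂, h₁₃, h₂₃⟩ := hdown x y h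
    exact ite_add_ite_add_ite_eq_one_s18 (hlabel 2 x y (by norm_num) (by omega))
      (hlabel 0 x (y + 1) (by norm_num) (by omega)) (hlabel 1 (x + 1) y (by norm_num) (by omega))
      ha h₁₂ h₁₃ h₂₃

/-- For a `1/2/3`-puzzle `P` on `Δ_n`, each label `a ∈ {1,2,3}` occurs on exactly `k`
of the `3k` boundary edges of the copy of `Δ_k` inside `Δ_n`: `k` times among the left
edges `P 1 0 y` (`y < k`), the right edges `P 2 x (k-1-x)` (`x < k`) and the bottom
edges `P 0 x 0` (`x < k`) together. -/
theorem boundary_label_count (n : ℕ) (P : ℕ → ℕ → ℕ → ℕ) (hP : IsPuzzle123 n P)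
    (k : ℕ) (hk : 1 ≤ k) (hkn : k ≤ n) (a : ℕ) (ha : a ∈ Finset.Icc 1 3) :
    ((Finset.range k).filter (fun y => P 1 0 y = a)).card
      + ((Finset.range k).filter (fun x => P 2 x (k - 1 - x) = a)).card
      + ((Finset.range k).filter (fun x => P 0 x 0 = a)).card = k :=
  boundary_label_count_general n P hP k hkn a ha
end
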